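/- arXiv:1304.1289 — 11 statements merged into one kernel-verified Lean document; each statement's English description precedes it below -/
import Mathlib

section
/- Let n ≥ 1 and let F be a finite family of n-tuples v = (v₁, …, vₙ) of vectors of ℤ^n, each forming a ℤ-basis of ℤ^n (equivalently, the integer matrix M_v whose columns are v₁, …, vₙ has determinant ±1), such that the union over v ∈ F of the cones Cone(v) = { Σ_k c_k v_k | c_k ∈ ℝ, c_k ≥ 0 } is all of ℝ^n. Then for every y ∈ (ℂ \ {0})^n there exists v ∈ F such that for every j ∈ {1, …, n}, |∏_{k=1}^n y_k^{A_{jk}}| ≤ 1, where A = M_v⁻¹ is the (integer) inverse matrix of M_v and the powers are integer powers (zpow). -/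
/-!
Apply the covering hypothesis to the point `x = (-log ‖y₁‖, …, -log ‖yₙ‖)`: it lies in some cone,
`x = M_v c` with `c ≥ 0`, so `A x = c` for `A = M_v⁻¹`. Since `log ‖∏ₖ yₖ^{A_{jk}}‖ = -(A x)_j = -c_j ≤ 0`,
every such monomial has norm at most `1`.
-/

open Matrix

theorem Matrix.inv_map_mulVec_map_mulVec {ι R S : Type*} [Fintype ι] [DecidableEq ι]
    [CommRing R] [CommRing S] (f : R →+* S) {M : Matrix ι ι R} (hM : IsUnit M.det) (c : ι → S) :
    M⁻¹.map f *ᵥ (M.map f *ᵥ c) = c := by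
  rw [mulVec_mulVec, ← Matrix.map_mul, nonsing_inv_mul M hM, Matrix.map_one f f.map_zero f.map_one,
    one_mulVec]

theorem norm_prod_zpow_eq_exp {𝕜 ι : Type*} [NormedField 𝕜] [Fintype ι] {y : ι → 𝕜}
    (hy : ∀ k, y k ≠ 0) (a : ι → ℤ) :
    ‖∏ k, y k ^ a k‖ = Real.exp (∑ k, a k * Real.log ‖y k‖) := by
  rw [norm_prod, Real.exp_sum]
  refine Finset.prod_congr rfl fun k _ => ?_
  rw [norm_zpow, mul_comm, ← Real.rpow_def_of_pos (norm_pos_iff.2 (hy k)), Real.rpow_intCast]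

theorem stmt_1_general (n : ℕ) (F : Finset (Fin n → Fin n → ℤ))
    (hbasis : ∀ v ∈ F,
      (Matrix.of fun i k => v k i).det = 1 ∨ (Matrix.of fun i k => v k i).det = -1)
    (hcover : ∀ y : Fin n → ℝ, ∃ v ∈ F, ∃ c : Fin n → ℝ, (∀ k, 0 ≤ c k) ∧
      ∀ i, y i = ∑ k, c k * (v k i : ℝ))
    (y : Fin n → ℂ) (hy : ∀ k, y k ≠ 0) :
    ∃ v ∈ F, ∀ j : Fin n,
      ‖∏ k, y k ^ ((Matrix.of fun i k => v k i)⁻¹ j k)‖ ≤ 1 := by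
  obtain ⟨v, hv, c, hc, hx⟩ := hcover fun i => -Real.log ‖y i‖
  refine ⟨v, hv, fun j => ?_⟩
  set M : Matrix (Fin n) (Fin n) ℤ := Matrix.of fun i k => v k i
  have hdet : IsUnit M.det := by
    rcases hbasis v hv with h | h <;> rw [h]
    exacts [isUnit_one, isUnit_one.neg]
  have hx' : (fun i => -Real.log ‖y i‖) = M.map (Int.castRingHom ℝ) *ᵥ c := by
    ext i
    simp [hx i, mulVec, dotProduct, M, mul_comm]
  have hAx := congrFun (M.inv_map_mulVec_map_mulVec (Int.castRingHom ℝ) hdet c) j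
  rw [← hx'] at hAx
  simp only [mulVec, dotProduct, map_apply, eq_intCast, mul_neg, Finset.sum_neg_distrib] at hAx
  rw [norm_prod_zpow_eq_exp hy, Real.exp_le_one_iff]
  linarith [hc j]

/-- If a finite family `F` of `ℤ`-bases `v = (v₁, …, vₙ)` of `ℤⁿ` is such that the
cones `Cone(v)` cover `ℝⁿ`, then for every `y ∈ (ℂ \ {0})ⁿ` there is `v ∈ F` with
`|∏ₖ yₖ^{A_{jk}}| ≤ 1` for all `j`, where `A = M_v⁻¹` and `M_v` has columns `v₁, …, vₙ`. -/
theorem stmt_1 (n : ℕ) (hn : 1 ≤ n) (F : Finset (Fin n → Fin n → ℤ))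
    (hbasis : ∀ v ∈ F,
      (Matrix.of fun i k => v k i).det = 1 ∨ (Matrix.of fun i k => v k i).det = -1)
    (hcover : ∀ y : Fin n → ℝ, ∃ v ∈ F, ∃ c : Fin n → ℝ, (∀ k, 0 ≤ c k) ∧
      ∀ i, y i = ∑ k, c k * (v k i : ℝ))
    (y : Fin n → ℂ) (hy : ∀ k, y k ≠ 0) :
    ∃ v ∈ F, ∀ j : Fin n,
      ‖∏ k, y k ^ ((Matrix.of fun i k => v k i)⁻¹ j k)‖ ≤ 1 :=
  stmt_1_general n F hbasis hcover y hy
end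

section
/- Let n ≥ 1 and let F be a finite family of n-tuples ṽ = (ṽ₁, …, ṽₙ) of vectors of ℕ^n (nonnegative integer entries), each forming a ℤ-basis of ℤ^n, such that the union over ṽ ∈ F of the cones Cone(ṽ) = { Σ_k c_k ṽ_k | c_k ≥ 0 } contains the nonnegative orthant [0,∞)^n. For ṽ ∈ F define the monomial map μ_ṽ : ℂ^n → ℂ^n by (μ_ṽ(x))_j = ∏_{k=1}^n x_k^{(ṽ_k)_j} (natural-number exponents). Then ⋃_{ṽ ∈ F} μ_ṽ(D̄^n) = D̄^n, where D̄^n = { x ∈ ℂ^n | ∀ j, |x_j| ≤ 1 } is the closed unit polydisc. -/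
/-!
A point `x` of the polydisc with no zero coordinate is `xⱼ = exp (-yⱼ + i θⱼ)` with `y ≥ 0`.
Choose a basis `ṽ ∈ F` whose cone contains `y`, say `y = ∑ₖ cₖ ṽₖ` with `c ≥ 0`, and solve
`∑ₖ φₖ ṽₖ = θ` over `ℝ` using `det ṽ = ±1`; then `zₖ = exp (-cₖ + i φₖ)` lies in the polydisc
and `μ_ṽ(z) = x`. Such points are dense in the polydisc, and the union of the images, a finite
union of continuous images of a compact set, is closed.
-/

open Complex Metric Set

section MonomialMap

variable {κ ι M : Type*} [Fintype κ]

def monomialMap [CommMonoid M] (v : κ → ι → ℕ) (x : κ → M) : ι → M :=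
  fun j => ∏ k, x k ^ v k j

theorem continuous_monomialMap [CommMonoid M] [TopologicalSpace M] [ContinuousMul M]
    (v : κ → ι → ℕ) : Continuous (monomialMap (M := M) v) :=
  continuous_pi fun _ => continuous_finsetProd _ fun k _ => (continuous_apply k).pow _

theorem mapsTo_monomialMap_closedBall [Fintype ι] [NormedCommRing M] [NormOneClass M]
    (v : κ → ι → ℕ) : MapsTo (monomialMap v) (closedBall (0 : κ → M) 1) (closedBall 0 1) := by
  intro x hx
  simp only [mem_closedBall_zero_iff, pi_norm_le_iff_of_nonneg zero_le_one] at hx ⊢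
  intro j
  calc ‖∏ k, x k ^ v k j‖ ≤ ∏ k, ‖x k ^ v k j‖ := Finset.norm_prod_le _ _
    _ ≤ 1 := Finset.prod_le_one (fun _ _ => norm_nonneg _) fun k _ =>
        (norm_pow_le _ _).trans (pow_le_one₀ (norm_nonneg _) (hx k))

theorem monomialMap_exp (v : κ → ι → ℕ) (w : κ → ℂ) :
    monomialMap v (fun k => exp (w k)) = fun j => exp (∑ k, v k j * w k) := by
  ext j
  simp only [monomialMap, exp_sum, exp_nat_mul]

theorem exists_mem_closedBall_monomialMap_eq [DecidableEq ι] [Fintype ι] (v : ι → ι → ℕ)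
    (hv : (Matrix.of fun j k => (v k j : ℝ)).det ≠ 0) {x : ι → ℂ} (hx : ∀ j, x j ≠ 0)
    {c : ι → ℝ} (hc : ∀ k, 0 ≤ c k) (hxc : ∀ j, -Real.log ‖x j‖ = ∑ k, c k * v k j) :
    ∃ z ∈ closedBall (0 : ι → ℂ) 1, monomialMap v z = x := by
  obtain ⟨φ, hφ⟩ := Matrix.mulVec_surjective_iff_isUnit.2
    ((Matrix.isUnit_iff_isUnit_det _).2 hv.isUnit) fun j => arg (x j)
  refine ⟨fun k => exp (-c k + φ k * I), ?_, ?_⟩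
  · simp only [mem_closedBall_zero_iff, pi_norm_le_iff_of_nonneg zero_le_one, norm_exp]
    intro k
    simpa using hc k
  · rw [monomialMap_exp]
    ext j
    conv_rhs => rw [← exp_log (hx j)]
    congr 1
    apply Complex.ext
    · simp [re_sum, log_re, ← neg_eq_iff_eq_neg.1 (hxc j), mul_comm]
    · simp [im_sum, log_im, ← congrFun hφ j, Matrix.mulVec, dotProduct, mul_comm]

end MonomialMap

theorem closedBall_subset_closure_inter_of_dense {E : Type*} [SeminormedAddCommGroup E]
    [NormedSpace ℝ E] {s : Set E} (hs : Dense s) (x : E) {r : ℝ} (hr : r ≠ 0) :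
    closedBall x r ⊆ closure (closedBall x r ∩ s) := by
  calc closedBall x r = closure (ball x r) := (closure_ball x hr).symm
    _ ⊆ closure (ball x r ∩ s) :=
        closure_minimal (hs.open_subset_closure_inter isOpen_ball) isClosed_closure
    _ ⊆ closure (closedBall x r ∩ s) :=
        closure_mono (inter_subset_inter_left _ ball_subset_closedBall)

theorem dense_setOf_forall_ne_zero (ι 𝕜 : Type*) [NontriviallyNormedField 𝕜] :
    Dense {x : ι → 𝕜 | ∀ j, x j ≠ 0} := by
  simpa [Set.pi] using dense_pi univ fun (_ : ι) _ => dense_compl_singleton (0 : 𝕜)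

theorem setOf_forall_norm_le_one_eq_closedBall {ι E : Type*} [Fintype ι] [SeminormedAddGroup E] :
    {x : ι → E | ∀ j, ‖x j‖ ≤ 1} = closedBall 0 1 := by
  ext x
  simp [pi_norm_le_iff_of_nonneg]

theorem stmt_2_general (n : ℕ) (F : Finset (Fin n → Fin n → ℕ))
    (hbasis : ∀ v ∈ F,
      (Matrix.of fun i k => (v k i : ℤ)).det = 1 ∨ (Matrix.of fun i k => (v k i : ℤ)).det = -1)
    (hcover : ∀ y : Fin n → ℝ, (∀ i, 0 ≤ y i) → ∃ v ∈ F, ∃ c : Fin n → ℝ, (∀ k, 0 ≤ c k) ∧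
      ∀ i, y i = ∑ k, c k * (v k i : ℝ)) :
    (⋃ v ∈ F, (fun x : Fin n → ℂ => fun j : Fin n => ∏ k, x k ^ (v k j)) ''
        {x : Fin n → ℂ | ∀ j, ‖x j‖ ≤ 1})
      = {x : Fin n → ℂ | ∀ j, ‖x j‖ ≤ 1} := by
  change (⋃ v ∈ F, monomialMap v '' _) = _
  rw [setOf_forall_norm_le_one_eq_closedBall]
  have hdet : ∀ v ∈ F, (Matrix.of fun j k => (v k j : ℝ)).det ≠ 0 := fun v hv => by
    have hcast := (Int.castRingHom ℝ).map_det (Matrix.of fun i k => (v k i : ℤ))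
    rw [show (Int.castRingHom ℝ).mapMatrix _ = Matrix.of fun j k => (v k j : ℝ) by ext; simp]
      at hcast
    rcases hbasis v hv with h | h <;> simp [← hcast, h]
  set U := ⋃ v ∈ F, monomialMap v '' closedBall (0 : Fin n → ℂ) 1
  have hclosed : IsClosed U := isClosed_biUnion_finset fun v _ =>
    ((isCompact_closedBall 0 1).image (continuous_monomialMap v)).isClosed
  have htorus : closedBall 0 1 ∩ {x | ∀ j, x j ≠ 0} ⊆ U := by
    rintro x ⟨hx, hx0⟩
    rw [← setOf_forall_norm_le_one_eq_closedBall] at hx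
    obtain ⟨v, hv, c, hc, hxc⟩ := hcover (fun j => -Real.log ‖x j‖)
      fun j => neg_nonneg.2 (Real.log_nonpos (norm_nonneg _) (hx j))
    obtain ⟨z, hz, rfl⟩ := exists_mem_closedBall_monomialMap_eq v (hdet v hv) hx0 hc hxc
    exact mem_biUnion hv (mem_image_of_mem _ hz)
  exact (iUnion₂_subset fun v _ => (mapsTo_monomialMap_closedBall v).image_subset).antisymm
    ((closedBall_subset_closure_inter_of_dense (dense_setOf_forall_ne_zero _ ℂ) 0
      one_ne_zero).trans (closure_minimal htorus hclosed))

/-- If a finite family `F` of `ℤ`-bases `ṽ` of `ℤⁿ` with nonnegative entries is such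
that the cones `Cone(ṽ)` cover the nonnegative orthant, then the union of the images of the
closed unit polydisc under the monomial maps `μ_ṽ(x)_j = ∏ₖ xₖ^{(ṽₖ)_j}` equals the closed
unit polydisc. -/
theorem stmt_2 (n : ℕ) (hn : 1 ≤ n) (F : Finset (Fin n → Fin n → ℕ))
    (hbasis : ∀ v ∈ F,
      (Matrix.of fun i k => (v k i : ℤ)).det = 1 ∨ (Matrix.of fun i k => (v k i : ℤ)).det = -1)
    (hcover : ∀ y : Fin n → ℝ, (∀ i, 0 ≤ y i) → ∃ v ∈ F, ∃ c : Fin n → ℝ, (∀ k, 0 ≤ c k) ∧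
      ∀ i, y i = ∑ k, c k * (v k i : ℝ)) :
    (⋃ v ∈ F, (fun x : Fin n → ℂ => fun j : Fin n => ∏ k, x k ^ (v k j)) ''
        {x : Fin n → ℂ | ∀ j, ‖x j‖ ≤ 1})
      = {x : Fin n → ℂ | ∀ j, ‖x j‖ ≤ 1} :=
  stmt_2_general n F hbasis hcover
end

section
/- Let n ≥ 1 and let A be a nonempty subset of ℕ^n, regarded as a subset of ℝ^n. Define cl(A) = { m ∈ [0,∞)^n | ∀ w ∈ [0,∞)^n, (⨅_{a ∈ A} ⟪a, w⟫) ≤ ⟪m, w⟫ }, where ⟪·,·⟫ is the standard inner product on ℝ^n and the infimum is a real infimum (it is ≥ 0 since a, w have nonnegative entries). Then there exists a finite subset F ⊆ cl(A) ∩ ℕ^n such that cl(A) = cl(F). -/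
/-!
Let `M` be the set of minimal elements of `A` for the coordinatewise order. By Dickson's lemma
(`ℕⁿ` is well-quasi-ordered) `M` is a finite antichain and every `a ∈ A` lies above some
`m ∈ M`. Since `⟪·, w⟫` is monotone for `w ≥ 0`, its infimum over `A` equals its infimum
on `M`, so `A` and `M` define the same closure.
-/

/-- The closure operation `A ↦ A̿ = { m ∈ [0,∞)ⁿ | ∀ w ∈ [0,∞)ⁿ, (⨅_{a ∈ A} ⟪a,w⟫) ≤ ⟪m,w⟫ }`. -/
noncomputable def cl (n : ℕ) (A : Set (Fin n → ℝ)) : Set (Fin n → ℝ) :=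
  {m | (∀ j, 0 ≤ m j) ∧ ∀ w : Fin n → ℝ, (∀ j, 0 ≤ w j) →
    (⨅ a : A, ∑ j, (a : Fin n → ℝ) j * w j) ≤ ∑ j, m j * w j}

open Set

section Closure

variable {n : ℕ}

lemma bddBelow_range_sum_mul {A : Set (Fin n → ℝ)} (hA : ∀ a ∈ A, ∀ j, 0 ≤ a j)
    {w : Fin n → ℝ} (hw : ∀ j, 0 ≤ w j) :
    BddBelow (range fun a : A => ∑ j, (a : Fin n → ℝ) j * w j) := by
  refine ⟨0, ?_⟩
  rintro _ ⟨a, rfl⟩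
  exact Finset.sum_nonneg fun j _ => mul_nonneg (hA a a.2 j) (hw j)

lemma mem_cl_of_mem {A : Set (Fin n → ℝ)} (hA : ∀ a ∈ A, ∀ j, 0 ≤ a j)
    {m : Fin n → ℝ} (hm : m ∈ A) : m ∈ cl n A :=
  ⟨hA m hm, fun _ hw => ciInf_le (bddBelow_range_sum_mul hA hw) ⟨m, hm⟩⟩

lemma iInf_sum_mul_eq_of_forall_exists_le {A B : Set (Fin n → ℝ)} (hBA : B ⊆ A)
    (hA : ∀ a ∈ A, ∀ j, 0 ≤ a j) (hdom : ∀ a ∈ A, ∃ b ∈ B, b ≤ a)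
    {w : Fin n → ℝ} (hw : ∀ j, 0 ≤ w j) :
    (⨅ a : A, ∑ j, (a : Fin n → ℝ) j * w j) = ⨅ b : B, ∑ j, (b : Fin n → ℝ) j * w j := by
  rcases A.eq_empty_or_nonempty with rfl | ⟨a₀, ha₀⟩
  · rw [subset_empty_iff.1 hBA]
  have : Nonempty A := ⟨⟨a₀, ha₀⟩⟩
  have : Nonempty B := let ⟨b, hb, _⟩ := hdom a₀ ha₀; ⟨⟨b, hb⟩⟩
  apply le_antisymm
  · exact le_ciInf fun b => ciInf_le (bddBelow_range_sum_mul hA hw) ⟨b, hBA b.2⟩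
  · refine le_ciInf fun a => ?_
    obtain ⟨b, hb, hba⟩ := hdom a a.2
    calc (⨅ b : B, ∑ j, (b : Fin n → ℝ) j * w j)
        ≤ ∑ j, b j * w j :=
          ciInf_le (bddBelow_range_sum_mul (fun b hb => hA b (hBA hb)) hw) ⟨b, hb⟩
      _ ≤ ∑ j, (a : Fin n → ℝ) j * w j :=
          Finset.sum_le_sum fun j _ => mul_le_mul_of_nonneg_right (hba j) (hw j)

lemma cl_eq_of_forall_exists_le {A B : Set (Fin n → ℝ)} (hBA : B ⊆ A)
    (hA : ∀ a ∈ A, ∀ j, 0 ≤ a j) (hdom : ∀ a ∈ A, ∃ b ∈ B, b ≤ a) : cl n A = cl n B := by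
  ext m
  simp only [cl, mem_ofPred_eq]
  refine and_congr_right fun _ => forall₂_congr fun w hw => ?_
  rw [iInf_sum_mul_eq_of_forall_exists_le hBA hA hdom hw]

end Closure

lemma finite_setOf_minimal {α : Type*} [PartialOrder α] [WellQuasiOrderedLE α] (A : Set α) :
    {a | Minimal (· ∈ A) a}.Finite :=
  (setOfPred_minimal_antichain _).finite_of_partiallyWellOrderedOn
    (isPWO_of_wellQuasiOrderedLE _)

theorem stmt_3_general (n : ℕ) (A : Set (Fin n → ℕ)) :
    ∃ F : Finset (Fin n → ℕ),
      (∀ f ∈ F, (fun j => (f j : ℝ)) ∈ cl n ((fun a : Fin n → ℕ => fun j => (a j : ℝ)) '' A)) ∧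
      cl n ((fun a : Fin n → ℕ => fun j => (a j : ℝ)) '' A)
        = cl n ((fun a : Fin n → ℕ => fun j => (a j : ℝ)) '' (↑F : Set (Fin n → ℕ))) := by
  set e : (Fin n → ℕ) → (Fin n → ℝ) := fun a j => (a j : ℝ)
  have hnonneg : ∀ a ∈ e '' A, ∀ j, 0 ≤ a j := by
    rintro _ ⟨a, -, rfl⟩ j
    exact Nat.cast_nonneg _
  have hmin := finite_setOf_minimal A
  refine ⟨hmin.toFinset, fun f hf => mem_cl_of_mem hnonneg ?_, ?_⟩
  · exact mem_image_of_mem e (hmin.mem_toFinset.1 hf).1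
  rw [hmin.coe_toFinset]
  refine cl_eq_of_forall_exists_le (image_mono fun a ha => ha.1) hnonneg ?_
  rintro _ ⟨a, ha, rfl⟩
  obtain ⟨b, hba, hb⟩ := (isPWO_of_wellQuasiOrderedLE A).exists_le_minimal ha
  exact ⟨e b, mem_image_of_mem e hb, fun j => Nat.cast_le.2 (hba j)⟩

/-- For any nonempty `A ⊆ ℕⁿ` there is a finite set `F ⊆ cl(A) ∩ ℕⁿ` with
`cl(A) = cl(F)`. -/
theorem stmt_3 (n : ℕ) (hn : 1 ≤ n) (A : Set (Fin n → ℕ)) (hA : A.Nonempty) :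
    ∃ F : Finset (Fin n → ℕ),
      (∀ f ∈ F, (fun j => (f j : ℝ)) ∈ cl n ((fun a : Fin n → ℕ => fun j => (a j : ℝ)) '' A)) ∧
      cl n ((fun a : Fin n → ℕ => fun j => (a j : ℝ)) '' A)
        = cl n ((fun a : Fin n → ℕ => fun j => (a j : ℝ)) '' (↑F : Set (Fin n → ℕ))) :=
  stmt_3_general n A
end

section
/- Let n ≥ 1, let I ⊆ {1, …, n}, let B ⊂ ℝ^n be a nonempty compact set such that m_j ≥ 0 for every m ∈ B and every j ∈ I, let Z be a nonempty compact topological space, and let φ : B × Z → ℝ be continuous. For each j ∉ I let K_j be a nonempty compact subset of ℂ \ {0}. Define, for x ∈ ℂ^n and z ∈ Z, ψ(x, z) = log ( sup_{m ∈ B} ( ∏_{j=1}^n |x_j|^{2 m_j} ) · e^{φ(m, z)} ) and g(x) = log ( sup_{m ∈ B} ∏_{j ∈ I} |x_j|^{2 m_j} ), where real powers |x_j|^{2m_j} use the convention 0^0 = 1 (Real.rpow). Then there exist real constants C₁ ≤ C₂ such that g(x) + C₁ ≤ ψ(x, z) ≤ g(x) + C₂ for every z ∈ Z and every x ∈ ℂ^n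 with |x_j| ≤ 1 for all j ∈ I and x_j ∈ K_j for all j ∉ I. -/
/-!
Splitting off the factors with `j ∉ I`, each term of `ψ` is the corresponding term of `g`
times `exp t`, where `t(m, z, x) = ∑_{j ∉ I} 2 m_j log |x_j| + φ(m, z)`. Since `|x_j|` stays in a
compact subset of `(0, ∞)` for `j ∉ I`, `t` is continuous on a compact set, so `|t| ≤ D`. The
pointwise bounds `e^{-D} g_m ≤ ψ_m ≤ e^D g_m` pass to the suprema and then to their logarithms.
-/

open Real Set Metric Finset

lemma abs_log_sub_log_le_of_le_exp_mul {a b D : ℝ} (ha : 0 ≤ a) (hD : 0 ≤ D)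
    (hab : a ≤ exp D * b) (hba : b ≤ exp D * a) : |log a - log b| ≤ D := by
  rcases ha.eq_or_lt with rfl | ha
  · obtain rfl : b = 0 :=
      le_antisymm (by simpa using hba) ((mul_nonneg_iff_of_pos_left (exp_pos D)).mp hab)
    simpa using hD
  have hb : 0 < b := (mul_pos_iff_of_pos_left (exp_pos D)).mp (ha.trans_le hab)
  have h₁ := log_le_log ha hab
  have h₂ := log_le_log hb hba
  rw [log_mul (exp_ne_zero D) hb.ne', log_exp] at h₁
  rw [log_mul (exp_ne_zero D) ha.ne', log_exp] at h₂
  rw [abs_sub_le_iff]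
  constructor <;> linarith

lemma ciSup_le_mul_ciSup {ι : Type*} [Nonempty ι] {f g : ι → ℝ} {c : ℝ} (hc : 0 ≤ c)
    (hg : BddAbove (range g)) (h : ∀ i, f i ≤ c * g i) : ⨆ i, f i ≤ c * ⨆ i, g i :=
  ciSup_le fun i => (h i).trans (mul_le_mul_of_nonneg_left (le_ciSup hg i) hc)

lemma abs_log_iSup_mul_exp_sub_log_iSup_le {ι : Type*} [Nonempty ι] {g t : ι → ℝ} {D : ℝ}
    (hg₀ : ∀ i, 0 ≤ g i) (hg : BddAbove (range g)) (ht : ∀ i, |t i| ≤ D) :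
    |log (⨆ i, g i * exp (t i)) - log (⨆ i, g i)| ≤ D := by
  have hupper : ∀ i, g i * exp (t i) ≤ exp D * g i := fun i => by
    rw [mul_comm]
    exact mul_le_mul_of_nonneg_right (exp_le_exp.2 (le_abs_self _ |>.trans (ht i))) (hg₀ i)
  have hlower : ∀ i, g i ≤ exp D * (g i * exp (t i)) := fun i => by
    rw [mul_left_comm, ← exp_add]
    exact le_mul_of_one_le_right (hg₀ i)
      (one_le_exp (by linarith [neg_abs_le (t i), ht i]))
  have hle := ciSup_le_mul_ciSup (exp_pos D).le hg hupper
  have hbdd : BddAbove (range fun i => g i * exp (t i)) :=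
    ⟨exp D * ⨆ i, g i, forall_mem_range.2 fun i =>
      (hupper i).trans (mul_le_mul_of_nonneg_left (le_ciSup hg i) (exp_pos D).le)⟩
  exact abs_log_sub_log_le_of_le_exp_mul
    (iSup_nonneg fun i => mul_nonneg (hg₀ i) (exp_pos _).le)
    ((abs_nonneg _).trans (ht (Classical.arbitrary ι))) hle
    (ciSup_le_mul_ciSup (exp_pos D).le hbdd hlower)

lemma prod_rpow_eq_prod_rpow_mul_exp {ι : Type*} [Fintype ι] [DecidableEq ι] (s : Finset ι)
    {r e : ι → ℝ} (hr : ∀ j ∉ s, 0 < r j) :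
    ∏ j, r j ^ e j = (∏ j ∈ s, r j ^ e j) * exp (∑ j ∈ sᶜ, log (r j) * e j) := by
  rw [← prod_mul_prod_compl s, exp_sum]
  congr 1
  exact prod_congr rfl fun j hj => rpow_def_of_pos (hr j (mem_compl.1 hj)) _

lemma exists_abs_sum_log_norm_mul_add_le {ι E Z : Type*} [NormedAddCommGroup E]
    [TopologicalSpace Z] [CompactSpace Z] (s : Finset ι) {B : Set (ι → ℝ)} (hB : IsCompact B)
    {φ : (ι → ℝ) × Z → ℝ} (hφ : ContinuousOn φ (B ×ˢ univ)) {R : Set (ι → E)}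
    (hR : IsCompact R) (hR₀ : ∀ x ∈ R, ∀ j ∈ s, x j ≠ 0) :
    ∃ D, 0 ≤ D ∧ ∀ m ∈ B, ∀ z, ∀ x ∈ R,
      |∑ j ∈ s, log ‖x j‖ * (2 * m j) + φ (m, z)| ≤ D := by
  have hcont : ContinuousOn (fun p : (ι → ℝ) × Z × (ι → E) =>
      ∑ j ∈ s, log ‖p.2.2 j‖ * (2 * p.1 j) + φ (p.1, p.2.1)) (B ×ˢ univ ×ˢ R) := by
    refine .add (continuousOn_finsetSum _ fun j hj => .mul ?_ (by fun_prop))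
      (hφ.comp (by fun_prop) fun p hp => ⟨hp.1, mem_univ _⟩)
    exact .log (by fun_prop) fun p hp => norm_ne_zero_iff.2 (hR₀ _ hp.2.2 j hj)
  obtain ⟨D, hD⟩ := (hB.prod (isCompact_univ.prod hR)).exists_bound_of_continuousOn hcont
  exact ⟨max D 0, le_max_right _ _, fun m hm z x hx =>
    (hD (m, z, x) ⟨hm, mem_univ _, hx⟩).trans (le_max_left _ _)⟩

theorem stmt_4_general (n : ℕ) (I : Finset (Fin n))
    (B : Set (Fin n → ℝ)) (hBne : B.Nonempty) (hBcpt : IsCompact B)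
    (hBpos : ∀ m ∈ B, ∀ j ∈ I, 0 ≤ m j)
    (Z : Type) [TopologicalSpace Z] [CompactSpace Z]
    (φ : (Fin n → ℝ) × Z → ℝ) (hφ : ContinuousOn φ (B ×ˢ (Set.univ : Set Z)))
    (K : Fin n → Set ℂ)
    (hK : ∀ j ∉ I, (K j).Nonempty ∧ IsCompact (K j) ∧ ∀ w ∈ K j, w ≠ 0) :
    ∃ C₁ C₂ : ℝ, C₁ ≤ C₂ ∧
      ∀ z : Z, ∀ x : Fin n → ℂ,
        (∀ j ∈ I, ‖x j‖ ≤ 1) → (∀ j ∉ I, x j ∈ K j) →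
        Real.log (⨆ m : B, ∏ j ∈ I, ‖x j‖ ^ (2 * (m : Fin n → ℝ) j)) + C₁
          ≤ Real.log (⨆ m : B, (∏ j, ‖x j‖ ^ (2 * (m : Fin n → ℝ) j))
              * Real.exp (φ ((m : Fin n → ℝ), z))) ∧
        Real.log (⨆ m : B, (∏ j, ‖x j‖ ^ (2 * (m : Fin n → ℝ) j))
              * Real.exp (φ ((m : Fin n → ℝ), z)))
          ≤ Real.log (⨆ m : B, ∏ j ∈ I, ‖x j‖ ^ (2 * (m : Fin n → ℝ) j)) + C₂ := by
  classical
  have : Nonempty B := hBne.to_subtype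
  set R : Set (Fin n → ℂ) := univ.pi fun j => if j ∈ I then closedBall 0 1 else K j
  have hR : IsCompact R := isCompact_univ_pi fun j => by
    split_ifs with hj
    exacts [isCompact_closedBall 0 1, (hK j hj).2.1]
  have hR₀ : ∀ x ∈ R, ∀ j ∈ Iᶜ, x j ≠ 0 := fun x hx j hj => by
    rw [Finset.mem_compl] at hj
    exact (hK j hj).2.2 _ (by simpa [hj] using hx j (mem_univ j))
  obtain ⟨D, hD₀, hD⟩ := exists_abs_sum_log_norm_mul_add_le Iᶜ hBcpt hφ hR hR₀
  refine ⟨-D, D, by linarith, fun z x hxI hxK => ?_⟩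
  have hx : x ∈ R := fun j _ => by
    dsimp only
    split_ifs with hj
    exacts [mem_closedBall_zero_iff.2 (hxI j hj), hxK j hj]
  have hsplit (m : B) : (∏ j, ‖x j‖ ^ (2 * (m : Fin n → ℝ) j)) * exp (φ (m, z)) =
      (∏ j ∈ I, ‖x j‖ ^ (2 * (m : Fin n → ℝ) j)) *
        exp (∑ j ∈ Iᶜ, log ‖x j‖ * (2 * (m : Fin n → ℝ) j) + φ (m, z)) := by
    rw [prod_rpow_eq_prod_rpow_mul_exp I fun j hj => norm_pos_iff.2 (hR₀ x hx j (mem_compl.2 hj)),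
      exp_add, mul_assoc]
  have hg_le_one (m : B) : ∏ j ∈ I, ‖x j‖ ^ (2 * (m : Fin n → ℝ) j) ≤ 1 :=
    prod_le_one (fun _ _ => rpow_nonneg (norm_nonneg _) _) fun j hj =>
      rpow_le_one (norm_nonneg _) (hxI j hj) (mul_nonneg zero_le_two (hBpos m m.2 j hj))
  have h := abs_log_iSup_mul_exp_sub_log_iSup_le
    (fun m : B => prod_nonneg fun _ _ => rpow_nonneg (norm_nonneg _) _)
    ⟨1, forall_mem_range.2 hg_le_one⟩ (fun m => hD m m.2 z x hx)
  rw [← iSup_congr hsplit, abs_sub_le_iff] at h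
  constructor <;> linarith

/-- The sandwich lemma: `ψ(x,z) = log sup_{m ∈ B} (∏_j |x_j|^{2m_j}) e^{φ(m,z)}`
is within bounded distance of `g(x) = log sup_{m ∈ B} ∏_{j ∈ I} |x_j|^{2m_j}` on the region
where `|x_j| ≤ 1` for `j ∈ I` and `x_j` ranges in a compact set `K_j ⊆ ℂ \ {0}` for `j ∉ I`. -/
theorem stmt_4 (n : ℕ) (hn : 1 ≤ n) (I : Finset (Fin n))
    (B : Set (Fin n → ℝ)) (hBne : B.Nonempty) (hBcpt : IsCompact B)
    (hBpos : ∀ m ∈ B, ∀ j ∈ I, 0 ≤ m j)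
    (Z : Type) [TopologicalSpace Z] [CompactSpace Z] [Nonempty Z]
    (φ : (Fin n → ℝ) × Z → ℝ) (hφ : ContinuousOn φ (B ×ˢ (Set.univ : Set Z)))
    (K : Fin n → Set ℂ)
    (hK : ∀ j ∉ I, (K j).Nonempty ∧ IsCompact (K j) ∧ ∀ w ∈ K j, w ≠ 0) :
    ∃ C₁ C₂ : ℝ, C₁ ≤ C₂ ∧
      ∀ z : Z, ∀ x : Fin n → ℂ,
        (∀ j ∈ I, ‖x j‖ ≤ 1) → (∀ j ∉ I, x j ∈ K j) →
        Real.log (⨆ m : B, ∏ j ∈ I, ‖x j‖ ^ (2 * (m : Fin n → ℝ) j)) + C₁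
          ≤ Real.log (⨆ m : B, (∏ j, ‖x j‖ ^ (2 * (m : Fin n → ℝ) j))
              * Real.exp (φ ((m : Fin n → ℝ), z))) ∧
        Real.log (⨆ m : B, (∏ j, ‖x j‖ ^ (2 * (m : Fin n → ℝ) j))
              * Real.exp (φ ((m : Fin n → ℝ), z)))
          ≤ Real.log (⨆ m : B, ∏ j ∈ I, ‖x j‖ ^ (2 * (m : Fin n → ℝ) j)) + C₂ :=
  stmt_4_general n I B hBne hBcpt hBpos Z φ hφ K hK
end

section
/- Let k ≥ 1, let B ⊂ [0,∞)^k be a nonempty compact set, and let w ∈ (0,∞)^k. Define ψ(x) = log ( sup_{m ∈ B} ∏_{j=1}^k |x_j|^{2 m_j} ) for x ∈ ℂ^k with 0 < |x_j| < 1 for all j. Then sup { t ∈ [0,∞) | ∃ C ∈ ℝ, ∀ x with 0 < |x_j| < 1 for all j : ψ(x) ≤ t · log ( Σ_{j=1}^k |x_j|^{2 w_j} ) + C } = min_{m ∈ B} Σ_{j=1}^k m_j / w_j. In particular, taking w = (1, …, 1), the Lelong number of ψ at the origin, ν(ψ, 0) = sup { t ≥ 0 | ψ(x) ≤ t log(Σ_j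 |x_j|²) + O(1) near 0 }, equals min_{m ∈ B} Σ_{j=1}^k m_j. -/
/-!
Write `a_j = |x_j|` and `ν = inf_{m ∈ B} Σ_j m_j / w_j`. For the upper bound, put
`c = min(Σ_j a_j^{2w_j}, 1)`; then `a_j^{2m_j} = (a_j^{2w_j})^{m_j/w_j} ≤ c^{m_j/w_j}`, so every
product is at most `c^{Σ_j m_j/w_j} ≤ c^ν ≤ (Σ_j a_j^{2w_j})^ν`, i.e. `ψ ≤ ν log Σ_j a_j^{2w_j}`.
For the lower bound, test along the curve `a_j = exp(-s/(2w_j))`, `s → ∞`: there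
`Σ_j a_j^{2w_j} = k e^{-s}` and `∏_j a_j^{2m_j} = exp(-s Σ_j m_j/w_j)`, so an estimate with
constant `t` forces `s (t - Σ_j m_j/w_j) ≤ t log k + C` for all `s > 0`.
-/

open Real Finset

section

variable {ι : Type*} [Fintype ι]

theorem prod_rpow_le_sum_rpow_rpow [Nonempty ι] {a m w : ι → ℝ} {ν : ℝ}
    (ha₀ : ∀ j, 0 < a j) (ha₁ : ∀ j, a j ≤ 1) (hm : ∀ j, 0 ≤ m j) (hw : ∀ j, 0 < w j)
    (hν₀ : 0 ≤ ν) (hν : ν ≤ ∑ j, m j / w j) :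
    ∏ j, a j ^ m j ≤ (∑ j, a j ^ w j) ^ ν := by
  set S := ∑ j, a j ^ w j
  have hS : 0 < S := sum_pos (fun j _ => rpow_pos_of_pos (ha₀ j) _) univ_nonempty
  set c := min S 1
  have hc : 0 < c := lt_min hS one_pos
  have hterm : ∀ j, a j ^ w j ≤ c := fun j =>
    le_min (single_le_sum (fun i _ => (rpow_pos_of_pos (ha₀ i) _).le) (mem_univ j))
      (rpow_le_one (ha₀ j).le (ha₁ j) (hw j).le)
  calc ∏ j, a j ^ m j = ∏ j, (a j ^ w j) ^ (m j / w j) := by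
        refine prod_congr rfl fun j _ => ?_
        rw [← rpow_mul (ha₀ j).le, mul_div_cancel₀ _ (hw j).ne']
    _ ≤ ∏ j, c ^ (m j / w j) :=
        prod_le_prod (fun j _ => rpow_nonneg (rpow_pos_of_pos (ha₀ j) _).le _) fun j _ =>
          rpow_le_rpow (rpow_pos_of_pos (ha₀ j) _).le (hterm j) (div_nonneg (hm j) (hw j).le)
    _ = c ^ ∑ j, m j / w j := (rpow_sum_of_pos hc _ _).symm
    _ ≤ c ^ ν := rpow_le_rpow_of_exponent_ge hc (min_le_right _ _) hν
    _ ≤ S ^ ν := rpow_le_rpow hc.le (min_le_left _ _) hν₀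

theorem nonpos_of_forall_pos_mul_le {d K : ℝ} (h : ∀ s > 0, s * d ≤ K) : d ≤ 0 := by
  by_contra! hd
  have := h ((|K| + 1) / d) (by positivity)
  rw [div_mul_cancel₀ _ hd.ne'] at this
  linarith [le_abs_self K]

theorem le_sum_div_of_forall_log_prod_rpow_le [Nonempty ι] {m w : ι → ℝ} (hw : ∀ j, 0 < w j)
    {t C : ℝ}
    (h : ∀ s > 0, log (∏ j, exp (-s / (2 * w j)) ^ (2 * m j))
      ≤ t * log (∑ j, exp (-s / (2 * w j)) ^ (2 * w j)) + C) :
    t ≤ ∑ j, m j / w j := by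
  refine sub_nonpos.mp (nonpos_of_forall_pos_mul_le (K := t * log (Fintype.card ι) + C)
    fun s hs => ?_)
  have hsum : ∑ j, exp (-s / (2 * w j)) ^ (2 * w j) = Fintype.card ι * exp (-s) := by
    simp [← exp_mul, div_mul_cancel₀ _ (mul_pos two_pos (hw _)).ne']
  have hprod : ∏ j, exp (-s / (2 * w j)) ^ (2 * m j) = exp (-s * ∑ j, m j / w j) := by
    rw [mul_sum, exp_sum]
    refine prod_congr rfl fun j _ => ?_
    rw [← exp_mul]
    field_simp [(hw j).ne']
  have hcurve := h s hs
  rw [hsum, hprod, log_mul (by positivity) (exp_pos _).ne', log_exp, log_exp] at hcurve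
  linarith

theorem bddAbove_range_prod_rpow {B : Set (ι → ℝ)} (hB : ∀ m ∈ B, ∀ j, 0 ≤ m j) {a : ι → ℝ}
    (ha₀ : ∀ j, 0 < a j) (ha₁ : ∀ j, a j ≤ 1) :
    BddAbove (Set.range fun m : B => ∏ j, a j ^ (2 * (m : ι → ℝ) j)) := by
  refine ⟨1, ?_⟩
  rintro _ ⟨m, rfl⟩
  exact prod_le_one (fun j _ => (rpow_pos_of_pos (ha₀ j) _).le) fun j _ =>
    rpow_le_one (ha₀ j).le (ha₁ j) (mul_nonneg zero_le_two (hB m m.2 j))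

theorem iInf_sum_div_nonneg {B : Set (ι → ℝ)} [Nonempty B] (hB : ∀ m ∈ B, ∀ j, 0 ≤ m j)
    {w : ι → ℝ} (hw : ∀ j, 0 < w j) :
    0 ≤ ⨅ m : B, ∑ j, (m : ι → ℝ) j / w j :=
  le_ciInf fun m => sum_nonneg fun j _ => div_nonneg (hB m m.2 j) (hw j).le

theorem iInf_sum_div_le {B : Set (ι → ℝ)} (hB : ∀ m ∈ B, ∀ j, 0 ≤ m j)
    {w : ι → ℝ} (hw : ∀ j, 0 < w j) (m : B) :
    ⨅ m : B, ∑ j, (m : ι → ℝ) j / w j ≤ ∑ j, (m : ι → ℝ) j / w j :=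
  ciInf_le ⟨0, by
    rintro _ ⟨m, rfl⟩
    exact sum_nonneg fun j _ => div_nonneg (hB m m.2 j) (hw j).le⟩ m

theorem log_iSup_prod_rpow_le [Nonempty ι] {B : Set (ι → ℝ)} [Nonempty B]
    (hB : ∀ m ∈ B, ∀ j, 0 ≤ m j) {w : ι → ℝ} (hw : ∀ j, 0 < w j) {a : ι → ℝ}
    (ha₀ : ∀ j, 0 < a j) (ha₁ : ∀ j, a j ≤ 1) :
    log (⨆ m : B, ∏ j, a j ^ (2 * (m : ι → ℝ) j))
      ≤ (⨅ m : B, ∑ j, (m : ι → ℝ) j / w j) * log (∑ j, a j ^ (2 * w j)) := by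
  have hprod : ∀ m : B, ∏ j, a j ^ (2 * (m : ι → ℝ) j)
      ≤ (∑ j, a j ^ (2 * w j)) ^ ⨅ m : B, ∑ j, (m : ι → ℝ) j / w j := fun m =>
    prod_rpow_le_sum_rpow_rpow ha₀ ha₁ (fun j => mul_nonneg zero_le_two (hB m m.2 j))
      (fun j => mul_pos two_pos (hw j)) (iInf_sum_div_nonneg hB hw) <| by
        simpa only [mul_div_mul_left _ _ (two_ne_zero' ℝ)] using iInf_sum_div_le hB hw m
  obtain ⟨m₀⟩ := ‹Nonempty B›
  have hsup : 0 < ⨆ m : B, ∏ j, a j ^ (2 * (m : ι → ℝ) j) :=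
    (prod_pos fun j _ => rpow_pos_of_pos (ha₀ j) _).trans_le
      (le_ciSup (bddAbove_range_prod_rpow hB ha₀ ha₁) m₀)
  have hS : 0 < ∑ j, a j ^ (2 * w j) :=
    sum_pos (fun j _ => rpow_pos_of_pos (ha₀ j) _) univ_nonempty
  rw [← log_rpow hS]
  exact log_le_log hsup (ciSup_le hprod)

end

theorem stmt_5_general (k : ℕ) (hk : 1 ≤ k)
    (B : Set (Fin k → ℝ)) (hBne : B.Nonempty)
    (hBpos : ∀ m ∈ B, ∀ j, 0 ≤ m j)
    (w : Fin k → ℝ) (hw : ∀ j, 0 < w j) :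
    sSup {t : ℝ | 0 ≤ t ∧ ∃ C : ℝ,
        ∀ x : Fin k → ℂ, (∀ j, 0 < ‖x j‖ ∧ ‖x j‖ < 1) →
          Real.log (⨆ m : B, ∏ j, ‖x j‖ ^ (2 * (m : Fin k → ℝ) j))
            ≤ t * Real.log (∑ j, ‖x j‖ ^ (2 * w j)) + C}
      = ⨅ m : B, ∑ j, (m : Fin k → ℝ) j / w j := by
  have : Nonempty (Fin k) := Fin.pos_iff_nonempty.mp hk
  have : Nonempty B := hBne.to_subtype
  refine IsGreatest.csSup_eq ⟨⟨iInf_sum_div_nonneg hBpos hw, 0, fun x hx => ?_⟩, ?_⟩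
  · rw [add_zero]
    exact log_iSup_prod_rpow_le hBpos hw (fun j => (hx j).1) fun j => (hx j).2.le
  · rintro t ⟨-, C, hC⟩
    refine le_ciInf fun m => le_sum_div_of_forall_log_prod_rpow_le hw (C := C) fun s hs => ?_
    let x : Fin k → ℂ := fun j => (exp (-s / (2 * w j)) : ℂ)
    have hx : ∀ j, ‖x j‖ = exp (-s / (2 * w j)) := fun j => by
      simp only [x, Complex.norm_real, norm_eq_abs, abs_exp]
    have hx₁ : ∀ j, exp (-s / (2 * w j)) < 1 := fun j =>
      exp_lt_one_iff.mpr (div_neg_of_neg_of_pos (neg_neg_of_pos hs) (mul_pos two_pos (hw j)))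
    have hψ := hC x fun j => hx j ▸ ⟨exp_pos _, hx₁ j⟩
    simp only [hx] at hψ
    refine le_trans (log_le_log (prod_pos fun j _ => by positivity) ?_) hψ
    exact le_ciSup (bddAbove_range_prod_rpow hBpos (fun j => exp_pos _)
      fun j => (hx₁ j).le) m

/-- For `ψ(x) = log sup_{m ∈ B} ∏_j |x_j|^{2m_j}` on the punctured open polydisc
and weights `w_j > 0`, the Kiselman number
`sup { t ≥ 0 | ψ ≤ t log Σ_j |x_j|^{2w_j} + O(1) }` equals `min_{m ∈ B} Σ_j m_j / w_j`. -/
theorem stmt_5 (k : ℕ) (hk : 1 ≤ k)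
    (B : Set (Fin k → ℝ)) (hBne : B.Nonempty) (hBcpt : IsCompact B)
    (hBpos : ∀ m ∈ B, ∀ j, 0 ≤ m j)
    (w : Fin k → ℝ) (hw : ∀ j, 0 < w j) :
    sSup {t : ℝ | 0 ≤ t ∧ ∃ C : ℝ,
        ∀ x : Fin k → ℂ, (∀ j, 0 < ‖x j‖ ∧ ‖x j‖ < 1) →
          Real.log (⨆ m : B, ∏ j, ‖x j‖ ^ (2 * (m : Fin k → ℝ) j))
            ≤ t * Real.log (∑ j, ‖x j‖ ^ (2 * w j)) + C}
      = ⨅ m : B, ∑ j, (m : Fin k → ℝ) j / w j :=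
  stmt_5_general k hk B hBne hBpos w hw
end

section
/- Let k ≥ 1, let B ⊂ [0,∞)^k be a nonempty compact set, let t > 0, and let p ∈ ℕ^k. The function x ↦ ( ∏_{j=1}^k |x_j|^{2 p_j} ) · ( sup_{m ∈ B} ∏_{j=1}^k |x_j|^{2 m_j} )^{−t}, defined for x in the open unit polydisc D^k = { x ∈ ℂ^k | ∀ j, |x_j| < 1 } with all coordinates x_j ≠ 0, is integrable on D^k with respect to Lebesgue (volume) measure on ℂ^k if and only if for every w ∈ [0,∞)^k with w ≠ 0 one has t · min_{m ∈ B} ⟪m, w⟫ < Σ_{j=1}^k (p_j + 1) w_j. -/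
/-!
Substituting `x_j = exp (-z_j)` with `Re z_j > 0` and `Im z_j ∈ [-π, π)` parametrizes the
polydisc minus the coordinate hyperplanes, with real Jacobian `∏ j, exp (-2 Re z_j)`. The
integrand then depends only on `s = Re z`, so the question is whether `exp (-G s)` is
integrable on the open positive orthant, where
`G s = 2 (∑ j, (p_j + 1) s_j - t min_{m ∈ B} ⟪m, s⟫)` is continuous, positively homogeneous and
subadditive. If `G > 0` on the orthant minus `0`, compactness of the simplex gives
`G s ≥ c ∑ j, s_j` with `c > 0`, and `exp (-G)` is dominated by a product of decaying exponentials.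
If `G w ≤ 0` for some such `w`, then `G` is bounded above on the translates `n w + (0, 1)^k`,
which are disjoint and fill a set of infinite measure.
-/

open MeasureTheory Set Function Complex

section SupportFunction

variable {ι : Type*} [Fintype ι] {B : Set (ι → ℝ)}

lemma IsCompact.bddBelow_range_dotProduct (hB : IsCompact B) (s : ι → ℝ) :
    BddBelow (range fun m : B => (m : ι → ℝ) ⬝ᵥ s) := by
  simpa only [image_eq_range] using hB.bddBelow_image (f := fun m => m ⬝ᵥ s) (by fun_prop)

lemma IsCompact.continuous_iInf_dotProduct (hB : IsCompact B) :
    Continuous fun s : ι → ℝ => ⨅ m : B, (m : ι → ℝ) ⬝ᵥ s := by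
  simpa only [sInf_image'] using hB.continuous_sInf (f := fun s m => m ⬝ᵥ s) (by fun_prop)

lemma iInf_dotProduct_smul {a : ℝ} (ha : 0 ≤ a) (s : ι → ℝ) :
    ⨅ m : B, (m : ι → ℝ) ⬝ᵥ (a • s) = a * ⨅ m : B, (m : ι → ℝ) ⬝ᵥ s := by
  simp_rw [Real.mul_iInf_of_nonneg ha, dotProduct_smul, smul_eq_mul]

lemma IsCompact.iInf_dotProduct_add_le (hB : IsCompact B) (hne : B.Nonempty) (x y : ι → ℝ) :
    (⨅ m : B, (m : ι → ℝ) ⬝ᵥ x) + ⨅ m : B, (m : ι → ℝ) ⬝ᵥ y ≤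
      ⨅ m : B, (m : ι → ℝ) ⬝ᵥ (x + y) := by
  have := hne.to_subtype
  refine le_ciInf fun m => ?_
  rw [dotProduct_add]
  exact add_le_add (ciInf_le (hB.bddBelow_range_dotProduct x) m)
    (ciInf_le (hB.bddBelow_range_dotProduct y) m)

end SupportFunction

lemma Real.iSup_exp_neg_mul {ι : Sort*} [Nonempty ι] {g : ι → ℝ} (hg : BddBelow (range g))
    {a : ℝ} (ha : 0 ≤ a) : ⨆ i, Real.exp (-(a * g i)) = Real.exp (-(a * ⨅ i, g i)) := by
  refine (Antitone.map_ciInf_of_continuousAt (f := fun y => Real.exp (-(a * y))) (by fun_prop)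
    (fun x y hxy => ?_) hg).symm
  simp only [Real.exp_le_exp, neg_le_neg_iff]
  exact mul_le_mul_of_nonneg_left hxy ha

lemma Real.prod_exp_neg_rpow_mul {ι : Type*} [Fintype ι] (a : ℝ) (m s : ι → ℝ) :
    ∏ j, Real.exp (-s j) ^ (a * m j) = Real.exp (-(a * (m ⬝ᵥ s))) := by
  simp_rw [← Real.exp_mul, ← Real.exp_sum, dotProduct, Finset.mul_sum, ← Finset.sum_neg_distrib]
  congr 1
  exact Finset.sum_congr rfl fun j _ => by ring

section Criterion

variable {ι : Type*} [Fintype ι] {G : (ι → ℝ) → ℝ}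

lemma volume_iUnion_pi_Ioo_eq_top {w : (ι → ℝ)} {j₀ : ι} (hj₀ : w j₀ = 1) :
    volume (⋃ n : ℕ, univ.pi fun j => Ioo (n * w j) (n * w j + 1)) = ⊤ := by
  have hdisj :
      Pairwise (Disjoint on fun n : ℕ => univ.pi fun j => Ioo (n * w j) (n * w j + 1)) := by
    intro n n' hne
    refine disjoint_left.2 fun s hs hs' => hne ?_
    have h := hs j₀ (mem_univ _)
    have h' := hs' j₀ (mem_univ _)
    simp only [hj₀, mul_one, mem_Ioo] at h h'
    have : n < n' + 1 := by exact_mod_cast h.1.trans h'.2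
    have : n' < n + 1 := by exact_mod_cast h'.1.trans h.2
    omega
  rw [measure_iUnion hdisj fun n => MeasurableSet.univ_pi fun j => measurableSet_Ioo]
  simp [Real.volume_pi_Ioo]

lemma not_integrableOn_exp_neg_of_nonpos (hcont : Continuous G)
    (hsmul : ∀ a : ℝ, 0 ≤ a → ∀ s, G (a • s) = a * G s) (hadd : ∀ x y, G (x + y) ≤ G x + G y)
    {w : ι → ℝ} (hw : ∀ j, 0 ≤ w j) {j₀ : ι} (hj₀ : w j₀ = 1) (hGw : G w ≤ 0) :
    ¬ IntegrableOn (fun s => Real.exp (-G s)) (univ.pi fun _ => Ioi 0) := by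
  obtain ⟨M, hM⟩ := (isCompact_Icc (a := (0 : ι → ℝ)) (b := 1)).bddAbove_image hcont.continuousOn
  set T := ⋃ n : ℕ, univ.pi fun j => Ioo (n * w j) (n * w j + 1)
  have hT : T ⊆ univ.pi fun _ => Ioi 0 := by
    simp only [T, iUnion_subset_iff]
    exact fun n => pi_mono fun j _ x hx => (mul_nonneg n.cast_nonneg (hw j)).trans_lt hx.1
  -- On the `n`-th box, `s = n • w + u` with `u ∈ [0, 1]^ι`, and `G (n • w) ≤ 0`.
  have hGT : ∀ s ∈ T, G s ≤ M := by
    simp only [T, mem_iUnion, mem_univ_pi, mem_Ioo]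
    rintro s ⟨n, hn⟩
    have hu : s - (n : ℝ) • w ∈ Icc 0 1 :=
      ⟨fun j => show 0 ≤ s j - n * w j by linarith [hn j],
        fun j => show s j - n * w j ≤ 1 by linarith [hn j]⟩
    calc G s = G ((n : ℝ) • w + (s - (n : ℝ) • w)) := by rw [add_sub_cancel]
      _ ≤ n * G w + G (s - (n : ℝ) • w) := by rw [← hsmul _ n.cast_nonneg]; exact hadd _ _
      _ ≤ 0 + M := add_le_add (mul_nonpos_of_nonneg_of_nonpos n.cast_nonneg hGw)
          (hM (mem_image_of_mem G hu))
      _ = M := zero_add M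
  intro hint
  have hfin := (hint.mono_set hT).measure_ge_lt_top (Real.exp_pos (-M))
  have hle := measure_mono (μ := volume.restrict T)
    fun s (hs : s ∈ T) => show Real.exp (-M) ≤ Real.exp (-G s) by simpa using hGT s hs
  rw [Measure.restrict_apply_self, volume_iUnion_pi_Ioo_eq_top hj₀] at hle
  exact (hle.trans_lt hfin).ne rfl

lemma exists_pos_mul_sum_le (hcont : Continuous G)
    (hsmul : ∀ a : ℝ, 0 ≤ a → ∀ s, G (a • s) = a * G s)
    (hpos : ∀ w : ι → ℝ, (∀ j, 0 ≤ w j) → w ≠ 0 → 0 < G w) :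
    ∃ c > 0, ∀ s : ι → ℝ, (∀ j, 0 ≤ s j) → c * ∑ j, s j ≤ G s := by
  obtain ⟨c, hc, hcG⟩ := (isCompact_stdSimplex ℝ ι).exists_forall_le' hcont.continuousOn
    fun u hu => hpos u hu.1 fun h => by simpa [h] using hu.2
  refine ⟨c, hc, fun s hs => ?_⟩
  rcases (Finset.sum_nonneg fun j _ => hs j).eq_or_lt with hsum | hsum
  · have hs0 : s = 0 := funext fun j => (Finset.sum_eq_zero_iff_of_nonneg fun j _ => hs j).1
      hsum.symm j (Finset.mem_univ j)
    have hG0 : G 0 = 0 := by simpa using hsmul 0 le_rfl 0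
    simp [hs0, hG0]
  have hu : (∑ j, s j)⁻¹ • s ∈ stdSimplex ℝ ι :=
    ⟨fun j => mul_nonneg (inv_nonneg.2 hsum.le) (hs j), by
      simp [← Finset.mul_sum, inv_mul_cancel₀ hsum.ne']⟩
  calc c * ∑ j, s j ≤ G ((∑ j, s j)⁻¹ • s) * ∑ j, s j := by gcongr; exact hcG _ hu
    _ = G s := by rw [hsmul _ (inv_nonneg.2 hsum.le), mul_comm, ← mul_assoc,
        mul_inv_cancel₀ hsum.ne', one_mul]

lemma integrableOn_prod_exp_neg_mul {c : ℝ} (hc : 0 < c) :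
    IntegrableOn (fun s : ι → ℝ => ∏ j, Real.exp (-c * s j)) (univ.pi fun _ => Ioi 0) := by
  rw [IntegrableOn, volume_pi, Measure.restrict_pi_pi]
  exact Integrable.fintype_prod fun _ => exp_neg_integrableOn_Ioi 0 hc

theorem integrableOn_exp_neg_iff (hcont : Continuous G)
    (hsmul : ∀ a : ℝ, 0 ≤ a → ∀ s, G (a • s) = a * G s) (hadd : ∀ x y, G (x + y) ≤ G x + G y) :
    IntegrableOn (fun s => Real.exp (-G s)) (univ.pi fun _ => Ioi 0) ↔
      ∀ w : ι → ℝ, (∀ j, 0 ≤ w j) → w ≠ 0 → 0 < G w := by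
  refine ⟨fun hint w hw hw0 => ?_, fun hpos => ?_⟩
  · obtain ⟨j₀, hj₀⟩ : ∃ j, 0 < w j := by
      by_contra! h
      exact hw0 (funext fun j => le_antisymm (h j) (hw j))
    by_contra! hGw
    refine not_integrableOn_exp_neg_of_nonpos hcont hsmul hadd (w := (w j₀)⁻¹ • w)
      (fun j => mul_nonneg (inv_nonneg.2 hj₀.le) (hw j)) (j₀ := j₀) ?_ ?_ hint
    · simp [inv_mul_cancel₀ hj₀.ne']
    · rw [hsmul _ (inv_nonneg.2 hj₀.le)]
      exact mul_nonpos_of_nonneg_of_nonpos (inv_nonneg.2 hj₀.le) hGw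
  · obtain ⟨c, hc, hcG⟩ := exists_pos_mul_sum_le hcont hsmul hpos
    refine (integrableOn_prod_exp_neg_mul hc).mono' (by fun_prop) ?_
    filter_upwards [ae_restrict_mem (MeasurableSet.univ_pi fun _ => measurableSet_Ioi)]
      with s hs
    rw [Real.norm_of_nonneg (Real.exp_pos _).le, ← Real.exp_sum, Real.exp_le_exp]
    simp only [neg_mul, Finset.sum_neg_distrib, ← Finset.mul_sum]
    linarith [hcG s fun j => (hs j (mem_univ j)).le]

end Criterion

namespace Complex

lemma injOn_exp_neg : InjOn (fun z : ℂ => exp (-z)) (Ioi 0 ×ℂ Ico (-Real.pi) Real.pi) := by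
  intro a ⟨_, ha⟩ b ⟨_, hb⟩ h
  have h' := congrArg log h
  simp only at h'
  rw [log_exp (by rw [neg_im]; linarith [ha.2]) (by rw [neg_im]; linarith [ha.1]),
    log_exp (by rw [neg_im]; linarith [hb.2]) (by rw [neg_im]; linarith [hb.1])] at h'
  exact neg_injective h'

lemma image_exp_neg : (fun z : ℂ => exp (-z)) '' (Ioi 0 ×ℂ Ico (-Real.pi) Real.pi) =
    Metric.ball 0 1 \ {0} := by
  ext x
  constructor
  · rintro ⟨z, ⟨hre, -⟩, rfl⟩
    simpa [norm_exp, exp_ne_zero] using hre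
  · rintro ⟨hx1, hx0 : x ≠ 0⟩
    rw [mem_ball_zero_iff] at hx1
    refine ⟨-log x, ⟨?_, ?_⟩, by simp [exp_log hx0]⟩
    · simpa [log_re] using Real.log_neg (norm_pos_iff.2 hx0) hx1
    · simpa [log_im, neg_le, neg_lt] using ⟨arg_le_pi x, neg_pi_lt_arg x⟩

lemma hasFDerivAt_exp_neg (z : ℂ) :
    HasFDerivAt (fun z : ℂ => exp (-z))
      ((ContinuousLinearMap.toSpanSingleton ℂ (-exp (-z))).restrictScalars ℝ) z := by
  have := ((hasDerivAt_exp (-z)).comp z (hasDerivAt_neg z)).hasFDerivAt.restrictScalars ℝ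
  simpa [Function.comp_def] using this

lemma det_restrictScalars_toSpanSingleton (c : ℂ) :
    ((ContinuousLinearMap.toSpanSingleton ℂ c).restrictScalars ℝ).det = normSq c := by
  rw [ContinuousLinearMap.det, ContinuousLinearMap.coe_restrictScalars,
    LinearMap.det_restrictScalars, ← ContinuousLinearMap.det,
    ContinuousLinearMap.det_toSpanSingleton, Algebra.norm_complex_apply]

end Complex

section Polydisc

variable {ι : Type*} [Fintype ι]

lemma pi_ball_diff_zero_ae_eq_polydisc :
    univ.pi (fun _ : ι => Metric.ball (0 : ℂ) 1 \ {0}) =ᵐ[volume]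
      {x : ι → ℂ | ∀ j, ‖x j‖ < 1} := by
  have : {x : ι → ℂ | ∀ j, ‖x j‖ < 1} = univ.pi fun _ => Metric.ball 0 1 := by ext; simp
  rw [this, volume_pi]
  exact Measure.ae_eq_set_pi fun _ _ => sdiff_null_ae_eq_self (measure_singleton 0)

lemma integrableOn_comp_re_iff (H : (ι → ℝ) → ℝ) {s t : ι → Set ℝ}
    (ht : volume (univ.pi t) ≠ 0) (ht' : volume (univ.pi t) ≠ ⊤) :
    IntegrableOn (fun z : ι → ℂ => H fun j => (z j).re) (univ.pi fun j => s j ×ℂ t j) ↔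
      IntegrableOn H (univ.pi s) := by
  let e : (ι → ℂ) ≃ᵐ (ι → ℝ) × (ι → ℝ) :=
    (MeasurableEquiv.piCongrRight fun _ => measurableEquivRealProd).trans
      (MeasurableEquiv.arrowProdEquivProdArrow ℝ ℝ ι)
  have he : MeasurePreserving e :=
    (volume_measurePreserving_arrowProdEquivProdArrow ℝ ℝ ι).comp
      (volume_preserving_pi fun _ => volume_preserving_equiv_real_prod)
  have hpre : e ⁻¹' (univ.pi s ×ˢ univ.pi t) = univ.pi fun j => s j ×ℂ t j := by
    ext z
    simp only [mem_preimage, mem_prod, mem_univ_pi, reProdIm, mem_inter_iff, forall_and]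
    rfl
  have := isFiniteMeasure_restrict.2 ht'
  rw [← hpre]
  refine (he.integrableOn_comp_preimage e.measurableEmbedding (f := fun q => H q.1)).trans ?_
  rw [IntegrableOn, Measure.volume_eq_prod, ← Measure.prod_restrict]
  exact Integrable.comp_fst_iff (by simpa using ht)

theorem integrableOn_polydisc_iff (f : (ι → ℝ) → ℝ) :
    IntegrableOn (fun x : ι → ℂ => f fun j => ‖x j‖) {x | ∀ j, ‖x j‖ < 1} ↔
      IntegrableOn (fun s => Real.exp (-2 * ∑ j, s j) * f fun j => Real.exp (-s j))
        (univ.pi fun _ => Ioi 0) := by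
  set S := univ.pi fun _ : ι => Ioi 0 ×ℂ Ico (-Real.pi) Real.pi
  have hS : MeasurableSet S := MeasurableSet.univ_pi fun _ =>
    (measurable_re measurableSet_Ioi).inter (measurable_im measurableSet_Ico)
  have hderiv (z : ι → ℂ) : HasFDerivAt (fun (z : ι → ℂ) j => exp (-z j))
      (ContinuousLinearMap.pi fun j => ((ContinuousLinearMap.toSpanSingleton ℂ
        (-exp (-z j))).restrictScalars ℝ).comp (ContinuousLinearMap.proj j)) z :=
    hasFDerivAt_pi.2 fun j =>
      (hasFDerivAt_exp_neg (z j)).comp (g := fun ζ : ℂ => exp (-ζ)) z (hasFDerivAt_apply j z)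
  have hinj : InjOn (fun (z : ι → ℂ) j => exp (-z j)) S := fun a ha b hb h =>
    funext fun j => injOn_exp_neg (ha j trivial) (hb j trivial) (congrFun h j)
  have himage :
      (fun (z : ι → ℂ) j => exp (-z j)) '' S = univ.pi fun _ => Metric.ball 0 1 \ {0} := by
    change Pi.map (fun _ ζ => exp (-ζ)) '' S = _
    rw [piMap_image_univ_pi, image_exp_neg]
  rw [IntegrableOn, ← Measure.restrict_congr_set pi_ball_diff_zero_ae_eq_polydisc, ← himage,
    ← IntegrableOn, integrableOn_image_iff_integrableOn_abs_det_fderiv_smul volume hS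
      (fun z _ => (hderiv z).hasFDerivWithinAt) hinj,
    ← integrableOn_comp_re_iff (t := fun _ => Ico (-Real.pi) Real.pi) _
      (by simp [volume_pi_pi, Real.pi_pos]) (by simp [volume_pi_pi])]
  congr! 2 with z
  simp only [ContinuousLinearMap.det_pi, det_restrictScalars_toSpanSingleton, normSq_neg]
  simp only [normSq_eq_norm_sq, norm_exp, neg_re, ← Real.exp_nat_mul, ← Real.exp_sum,
    smul_eq_mul, abs_of_pos (Real.exp_pos _), Finset.mul_sum]
  push_cast
  ring_nf

end Polydisc

theorem stmt_6_general (k : ℕ)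
    (B : Set (Fin k → ℝ)) (hBne : B.Nonempty) (hBcpt : IsCompact B)
    (t : ℝ) (ht : 0 < t) (p : Fin k → ℕ) :
    IntegrableOn
        (fun x : Fin k → ℂ =>
          (∏ j, ‖x j‖ ^ (2 * (p j : ℝ))) *
            (⨆ m : B, ∏ j, ‖x j‖ ^ (2 * (m : Fin k → ℝ) j)) ^ (-t))
        {x : Fin k → ℂ | ∀ j, ‖x j‖ < 1} volume
      ↔ ∀ w : Fin k → ℝ, (∀ j, 0 ≤ w j) → w ≠ 0 →
          t * (⨅ m : B, ∑ j, (m : Fin k → ℝ) j * w j) < ∑ j, ((p j : ℝ) + 1) * w j := by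
  have := hBne.to_subtype
  let φ (s : Fin k → ℝ) : ℝ := ⨅ m : B, (m : Fin k → ℝ) ⬝ᵥ s
  let G (s : Fin k → ℝ) : ℝ := 2 * ((fun j => (p j : ℝ) + 1) ⬝ᵥ s - t * φ s)
  have hcont : Continuous G := by
    have := hBcpt.continuous_iInf_dotProduct
    fun_prop
  have hsmul (a : ℝ) (ha : 0 ≤ a) (s : Fin k → ℝ) : G (a • s) = a * G s := by
    simp only [G, φ]
    rw [iInf_dotProduct_smul ha, dotProduct_smul, smul_eq_mul]
    ring
  have hadd (x y : Fin k → ℝ) : G (x + y) ≤ G x + G y := by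
    have := mul_le_mul_of_nonneg_left (hBcpt.iInf_dotProduct_add_le hBne x y) ht.le
    simp only [G, φ]
    rw [dotProduct_add]
    linarith
  have hG (s : Fin k → ℝ) : Real.exp (-2 * ∑ j, s j) * ((∏ j, Real.exp (-s j) ^ (2 * (p j : ℝ))) *
      (⨆ m : B, ∏ j, Real.exp (-s j) ^ (2 * (m : Fin k → ℝ) j)) ^ (-t)) = Real.exp (-G s) := by
    simp_rw [Real.prod_exp_neg_rpow_mul]
    rw [Real.iSup_exp_neg_mul (hBcpt.bddBelow_range_dotProduct s) zero_le_two, ← Real.exp_mul,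
      ← Real.exp_add, ← Real.exp_add]
    congr 1
    simp only [G, φ, dotProduct, add_mul, one_mul, Finset.sum_add_distrib]
    ring
  refine (integrableOn_polydisc_iff fun r => (∏ j, r j ^ (2 * (p j : ℝ))) *
    (⨆ m : B, ∏ j, r j ^ (2 * (m : Fin k → ℝ) j)) ^ (-t)).trans ?_
  simp only [hG]
  refine (integrableOn_exp_neg_iff hcont hsmul hadd).trans (forall₃_congr fun w _ _ => ?_)
  simp only [G, φ, dotProduct]
  constructor <;> intro h <;> linarith

/-- Howald–Guenancia type criterion: the monomial-type function
`x ↦ (∏_j |x_j|^{2p_j}) (sup_{m ∈ B} ∏_j |x_j|^{2m_j})^{-t}` is integrable on the open unit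
polydisc iff `t · min_{m ∈ B} ⟪m,w⟫ < Σ_j (p_j + 1) w_j` for every `w ∈ [0,∞)^k \ {0}`. -/
theorem stmt_6 (k : ℕ) (hk : 1 ≤ k)
    (B : Set (Fin k → ℝ)) (hBne : B.Nonempty) (hBcpt : IsCompact B)
    (hBpos : ∀ m ∈ B, ∀ j, 0 ≤ m j)
    (t : ℝ) (ht : 0 < t) (p : Fin k → ℕ) :
    IntegrableOn
        (fun x : Fin k → ℂ =>
          (∏ j, ‖x j‖ ^ (2 * (p j : ℝ))) *
            (⨆ m : B, ∏ j, ‖x j‖ ^ (2 * (m : Fin k → ℝ) j)) ^ (-t))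
        {x : Fin k → ℂ | ∀ j, ‖x j‖ < 1} volume
      ↔ ∀ w : Fin k → ℝ, (∀ j, 0 ≤ w j) → w ≠ 0 →
          t * (⨅ m : B, ∑ j, (m : Fin k → ℝ) j * w j) < ∑ j, ((p j : ℝ) + 1) * w j :=
  stmt_6_general k B hBne hBcpt t ht p
end

section
/- Fix an integer a > 1. Let H = { (α, β) ∈ ℝ² | α ≥ 0, β ≥ 0, a²(α+β)² = (1−α)² + (1−β)² } and ψ(x₁, x₂) = log ( sup_{(α,β) ∈ H} |x₁|^{2α} |x₂|^{2β} ). Then sup { t > 0 | the function (x₁,x₂) ↦ e^{−t ψ(x₁,x₂)} is integrable on the open unit polydisc of ℂ² } = √2 · a + 1. In particular this singularity exponent is irrational. -/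
/-!
Write `c = √2 a + 1`. The point `(1/c, 1/c)` lies on `H`, and every `(α, β) ∈ H` has
`α + β ≥ 2/c`, because `a²(α + β)² = (1 - α)² + (1 - β)² ≥ (2 - α - β)² / 2`. Hence on the unit
polydisc `(|x₁| |x₂|)^{2/c} ≤ e^ψ ≤ max(|x₁|, |x₂|)^{4/c}`. The lower bound dominates `e^{-tψ}` by
`|x₁|^{-2t/c} |x₂|^{-2t/c}`, integrable for `t < c`; the upper bound gives `e^{-tψ} ≥ ‖x‖^{-4t/c}`
for the sup norm of `ℂ² ≅ ℝ⁴`, which is not integrable near `0` once `t ≥ c`.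
-/

open MeasureTheory

/-- The set `H` of the Nakayama example. -/
def Hset (a : ℤ) : Set (ℝ × ℝ) :=
  {c | 0 ≤ c.1 ∧ 0 ≤ c.2 ∧ (a : ℝ) ^ 2 * (c.1 + c.2) ^ 2 = (1 - c.1) ^ 2 + (1 - c.2) ^ 2}

/-- The weight `ψ(x₁,x₂) = log sup_{(α,β) ∈ H} |x₁|^{2α}|x₂|^{2β}`. -/
noncomputable def psiN (a : ℤ) (x : ℂ × ℂ) : ℝ :=
  Real.log (⨆ c : Hset a,
    ‖x.1‖ ^ (2 * (c : ℝ × ℝ).1) * ‖x.2‖ ^ (2 * (c : ℝ × ℝ).2))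

open Metric Set Module

theorem integrableOn_norm_rpow_ball_iff {E : Type*} [NormedAddCommGroup E] [NormedSpace ℝ E]
    [FiniteDimensional ℝ E] [Nontrivial E] [MeasurableSpace E] [BorelSpace E]
    (μ : Measure E) [μ.IsAddHaarMeasure] {r s : ℝ} (hr : 0 < r) :
    IntegrableOn (fun x : E => ‖x‖ ^ s) (ball 0 r) μ ↔ -(finrank ℝ E : ℝ) < s := by
  have hd : ((finrank ℝ E - 1 : ℕ) : ℝ) = finrank ℝ E - 1 := by
    rw [Nat.cast_sub finrank_pos, Nat.cast_one]
  rw [integrableOn_fun_norm_addHaar μ (f := fun y => y ^ s),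
    integrableOn_congr_fun (g := fun y => y ^ (s + (finrank ℝ E - 1))) _ measurableSet_Ioo,
    intervalIntegral.integrableOn_Ioo_rpow_iff hr]
  · constructor <;> intro h <;> linarith
  · intro y hy
    change y ^ _ * y ^ s = _
    rw [← Real.rpow_natCast, hd, ← Real.rpow_add hy.1, add_comm]

section Hset

variable {a : ℤ}

noncomputable def nakayamaExponent (a : ℤ) : ℝ := √2 * a + 1

lemma nakayamaExponent_pos (ha : 0 ≤ a) : 0 < nakayamaExponent a := by
  unfold nakayamaExponent; positivity

lemma inv_nakayamaExponent_mem_Hset (ha : 0 ≤ a) :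
    ((nakayamaExponent a)⁻¹, (nakayamaExponent a)⁻¹) ∈ Hset a := by
  have hc := nakayamaExponent_pos ha
  refine ⟨by positivity, by positivity, ?_⟩
  have h2 : √2 ^ 2 = 2 := Real.sq_sqrt zero_le_two
  simp only
  field_simp
  unfold nakayamaExponent
  linear_combination (-(a:ℝ) ^ 2) * h2

lemma two_div_nakayamaExponent_le {p : ℝ × ℝ} (ha : 0 ≤ a) (hp : p ∈ Hset a) :
    2 / nakayamaExponent a ≤ p.1 + p.2 := by
  obtain ⟨h1, h2, h3⟩ := hp
  have ha' : (0 : ℝ) ≤ a := by exact_mod_cast ha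
  have hsq : √2 ^ 2 = 2 := Real.sq_sqrt zero_le_two
  -- `(1 - α)² + (1 - β)² ≥ (2 - (α + β))² / 2`
  have key : (2 - (p.1 + p.2)) ^ 2 ≤ (√2 * a * (p.1 + p.2)) ^ 2 := by
    nlinarith [sq_nonneg (p.1 - p.2)]
  have := le_of_sq_le_sq key (by positivity)
  rw [div_le_iff₀ (nakayamaExponent_pos ha), nakayamaExponent]
  linarith

lemma add_le_one_of_mem_Hset {p : ℝ × ℝ} (ha : 1 < a) (hp : p ∈ Hset a) : p.1 + p.2 ≤ 1 := by
  obtain ⟨h1, h2, h3⟩ := hp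
  have ha' : (4 : ℝ) ≤ a ^ 2 := by
    have : (2 : ℝ) ≤ a := by exact_mod_cast ha
    nlinarith
  nlinarith [mul_le_mul_of_nonneg_right ha' (sq_nonneg (p.1 + p.2)), mul_nonneg h1 h2]

end Hset

lemma rpow_mul_rpow_le_rpow_add {u v M α β : ℝ} (hu : 0 ≤ u) (hv : 0 ≤ v) (huM : u ≤ M)
    (hvM : v ≤ M) (hα : 0 ≤ α) (hβ : 0 ≤ β) : u ^ α * v ^ β ≤ M ^ (α + β) := by
  have hM := hu.trans huM
  rw [Real.rpow_add_of_nonneg hM hα hβ]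
  gcongr

section weight

variable {a : ℤ}

noncomputable def weightSup (a : ℤ) (x : ℂ × ℂ) : ℝ :=
  ⨆ c : Hset a, ‖x.1‖ ^ (2 * (c : ℝ × ℝ).1) * ‖x.2‖ ^ (2 * (c : ℝ × ℝ).2)

lemma psiN_eq_log_weightSup (x : ℂ × ℂ) : psiN a x = Real.log (weightSup a x) := rfl

lemma monomial_le_rpow_add {c : ℝ × ℝ} (hc : c ∈ Hset a) {x : ℂ × ℂ} {M : ℝ} (hM : ‖x‖ ≤ M) :
    ‖x.1‖ ^ (2 * c.1) * ‖x.2‖ ^ (2 * c.2) ≤ M ^ (2 * c.1 + 2 * c.2) := by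
  obtain ⟨h1, h2, -⟩ := hc
  exact rpow_mul_rpow_le_rpow_add (norm_nonneg _) (norm_nonneg _) ((norm_fst_le x).trans hM)
    ((norm_snd_le x).trans hM) (by positivity) (by positivity)

lemma bddAbove_range_monomial (ha : 1 < a) (x : ℂ × ℂ) :
    BddAbove (range fun c : Hset a =>
      ‖x.1‖ ^ (2 * (c : ℝ × ℝ).1) * ‖x.2‖ ^ (2 * (c : ℝ × ℝ).2)) := by
  refine ⟨max 1 ‖x‖ ^ (2 : ℝ), ?_⟩
  rintro _ ⟨c, rfl⟩
  refine (monomial_le_rpow_add c.2 (le_max_right 1 ‖x‖)).trans ?_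
  refine Real.rpow_le_rpow_of_exponent_le (le_max_left _ _) ?_
  linarith [add_le_one_of_mem_Hset ha c.2]

lemma measurable_weightSup (ha : 1 < a) : Measurable (weightSup a) := by
  have : Nonempty (Hset a) := ⟨_, inv_nakayamaExponent_mem_Hset (by omega)⟩
  refine (lowerSemicontinuous_ciSup (bddAbove_range_monomial ha) fun c => ?_).measurable
  obtain ⟨h1, h2, -⟩ := c.2
  exact Continuous.lowerSemicontinuous (by fun_prop (disch := positivity))

lemma measurable_psiN (ha : 1 < a) : Measurable (psiN a) :=
  (measurable_weightSup ha).log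

lemma rpow_mul_rpow_le_weightSup (ha : 1 < a) (x : ℂ × ℂ) :
    ‖x.1‖ ^ (2 * (nakayamaExponent a)⁻¹) * ‖x.2‖ ^ (2 * (nakayamaExponent a)⁻¹) ≤ weightSup a x :=
  le_ciSup (bddAbove_range_monomial ha x) ⟨_, inv_nakayamaExponent_mem_Hset (by omega)⟩

lemma weightSup_le_norm_rpow (ha : 1 < a) {x : ℂ × ℂ} (hx0 : x ≠ 0) (hx1 : ‖x‖ ≤ 1) :
    weightSup a x ≤ ‖x‖ ^ (4 / nakayamaExponent a) := by
  have : Nonempty (Hset a) := ⟨_, inv_nakayamaExponent_mem_Hset (by omega)⟩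
  refine ciSup_le fun c => (monomial_le_rpow_add c.2 le_rfl).trans ?_
  refine Real.rpow_le_rpow_of_exponent_ge (norm_pos_iff.mpr hx0) hx1 ?_
  have := two_div_nakayamaExponent_le (by omega) c.2
  rw [show (4 : ℝ) = 2 * 2 by norm_num, mul_div_assoc]
  linarith

end weight

lemma MeasureTheory.Measure.ae_fst_ne_and_snd_ne {α β : Type*} [MeasurableSpace α]
    [MeasurableSpace β] (μ : Measure α) (ν : Measure β) [NullSingletonClass μ]
    [NullSingletonClass ν] (a : α) (b : β) : ∀ᵐ x ∂μ.prod ν, x.1 ≠ a ∧ x.2 ≠ b :=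
  (Measure.quasiMeasurePreserving_fst.ae (μ.ae_ne a)).and
    (Measure.quasiMeasurePreserving_snd.ae (ν.ae_ne b))

lemma ae_restrict_unitBall_coords_ne_zero :
    ∀ᵐ x ∂volume.restrict (ball (0 : ℂ × ℂ) 1), x.1 ≠ 0 ∧ x.2 ≠ 0 ∧ ‖x‖ ≤ 1 := by
  filter_upwards [ae_restrict_mem measurableSet_ball,
    ae_restrict_of_ae (Measure.ae_fst_ne_and_snd_ne volume volume 0 0)] with x hx hne
  exact ⟨hne.1, hne.2, (mem_ball_zero_iff.mp hx).le⟩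

section bounds

variable {a : ℤ} {t : ℝ} {x : ℂ × ℂ}

lemma weightSup_pos (ha : 1 < a) (h1 : x.1 ≠ 0) (h2 : x.2 ≠ 0) : 0 < weightSup a x :=
  (by positivity : (0 : ℝ) < _).trans_le (rpow_mul_rpow_le_weightSup ha x)

lemma exp_neg_mul_psiN_eq_rpow (ha : 1 < a) (h1 : x.1 ≠ 0) (h2 : x.2 ≠ 0) :
    Real.exp (-(t * psiN a x)) = weightSup a x ^ (-t) := by
  rw [Real.rpow_def_of_pos (weightSup_pos ha h1 h2), psiN_eq_log_weightSup]
  ring_nf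

lemma exp_neg_mul_psiN_le (ha : 1 < a) (ht : 0 ≤ t) (h1 : x.1 ≠ 0) (h2 : x.2 ≠ 0) :
    Real.exp (-(t * psiN a x)) ≤
      ‖x.1‖ ^ (2 * (nakayamaExponent a)⁻¹ * -t) * ‖x.2‖ ^ (2 * (nakayamaExponent a)⁻¹ * -t) := by
  set e := 2 * (nakayamaExponent a)⁻¹
  rw [exp_neg_mul_psiN_eq_rpow ha h1 h2, Real.rpow_mul (norm_nonneg _) e,
    Real.rpow_mul (norm_nonneg _) e, ← Real.mul_rpow (by positivity) (by positivity)]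
  exact Real.rpow_le_rpow_of_nonpos (by positivity) (rpow_mul_rpow_le_weightSup ha x)
    (neg_nonpos.mpr ht)

lemma norm_rpow_le_exp_neg_mul_psiN (ha : 1 < a) (ht : 0 ≤ t) (h1 : x.1 ≠ 0) (h2 : x.2 ≠ 0)
    (hx : ‖x‖ ≤ 1) :
    ‖x‖ ^ (4 / nakayamaExponent a * -t) ≤ Real.exp (-(t * psiN a x)) := by
  have hx0 : x ≠ 0 := fun h => h1 (by rw [h]; rfl)
  rw [exp_neg_mul_psiN_eq_rpow ha h1 h2, Real.rpow_mul (norm_nonneg _)]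
  exact Real.rpow_le_rpow_of_nonpos (weightSup_pos ha h1 h2)
    (weightSup_le_norm_rpow ha hx0 hx) (neg_nonpos.mpr ht)

end bounds

section exponent

variable {a : ℤ} {t : ℝ}

lemma polydisc_eq_ball : {x : ℂ × ℂ | ‖x.1‖ < 1 ∧ ‖x.2‖ < 1} = ball 0 1 := by
  ext x
  simp [Prod.norm_def]

lemma integrableOn_norm_rpow_unitBall_complex {s : ℝ} (hs : -2 < s) :
    IntegrableOn (fun z : ℂ => ‖z‖ ^ s) (ball 0 1) :=
  (integrableOn_norm_rpow_ball_iff volume one_pos).mpr (by simpa using hs)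

lemma integrableOn_exp_neg_mul_psiN (ha : 1 < a) (ht : 0 ≤ t) (htc : t < nakayamaExponent a) :
    IntegrableOn (fun x : ℂ × ℂ => Real.exp (-(t * psiN a x))) (ball 0 1) := by
  have hc := nakayamaExponent_pos (a := a) (by omega)
  set e := 2 * (nakayamaExponent a)⁻¹ * -t
  have he : -2 < e := by
    have : t * (nakayamaExponent a)⁻¹ < 1 := by rwa [← div_eq_mul_inv, div_lt_one hc]
    linarith
  have hprod : IntegrableOn (fun x : ℂ × ℂ => ‖x.1‖ ^ e * ‖x.2‖ ^ e) (ball 0 1) := by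
    rw [← Prod.mk_zero_zero, ← ball_prod_same, IntegrableOn,
      Measure.volume_eq_prod, ← Measure.prod_restrict]
    exact (integrableOn_norm_rpow_unitBall_complex he).mul_prod
      (integrableOn_norm_rpow_unitBall_complex he)
  refine hprod.mono' ((measurable_psiN ha).const_mul t).neg.exp.aestronglyMeasurable ?_
  filter_upwards [ae_restrict_unitBall_coords_ne_zero] with x hx
  rw [Real.norm_of_nonneg (Real.exp_pos _).le]
  exact exp_neg_mul_psiN_le ha ht hx.1 hx.2.1

lemma lt_nakayamaExponent_of_integrableOn (ha : 1 < a) (ht : 0 ≤ t)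
    (hint : IntegrableOn (fun x : ℂ × ℂ => Real.exp (-(t * psiN a x))) (ball 0 1)) :
    t < nakayamaExponent a := by
  have hc := nakayamaExponent_pos (a := a) (by omega)
  have hnorm :
      IntegrableOn (fun x : ℂ × ℂ => ‖x‖ ^ (4 / nakayamaExponent a * -t)) (ball 0 1) := by
    refine hint.mono' (measurable_norm.pow_const _).aestronglyMeasurable ?_
    filter_upwards [ae_restrict_unitBall_coords_ne_zero] with x hx
    rw [Real.norm_of_nonneg (by positivity)]
    exact norm_rpow_le_exp_neg_mul_psiN ha ht hx.1 hx.2.1 hx.2.2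
  rw [Measure.volume_eq_prod, integrableOn_norm_rpow_ball_iff _ one_pos] at hnorm
  have h4 : -(4 : ℝ) < 4 / nakayamaExponent a * -t := by simpa [Module.finrank_prod] using hnorm
  rw [div_mul_eq_mul_div, lt_div_iff₀ hc] at h4
  linarith

lemma irrational_nakayamaExponent (ha : a ≠ 0) : Irrational (nakayamaExponent a) := by
  simpa [nakayamaExponent] using (irrational_sqrt_two.mul_intCast ha).add_intCast 1

end exponent

/-- The singularity exponent of `ψ` in the Nakayama example equals `√2 a + 1`,
an irrational number. -/
theorem stmt_10 (a : ℤ) (ha : 1 < a) :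
    sSup {t : ℝ | 0 < t ∧ IntegrableOn (fun x : ℂ × ℂ => Real.exp (-(t * psiN a x)))
        {x : ℂ × ℂ | ‖x.1‖ < 1 ∧ ‖x.2‖ < 1} volume}
      = Real.sqrt 2 * (a : ℝ) + 1 ∧ Irrational (Real.sqrt 2 * (a : ℝ) + 1) := by
  have hset : {t : ℝ | 0 < t ∧ IntegrableOn (fun x : ℂ × ℂ => Real.exp (-(t * psiN a x)))
      {x : ℂ × ℂ | ‖x.1‖ < 1 ∧ ‖x.2‖ < 1} volume} = Ioo 0 (nakayamaExponent a) := by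
    ext t
    rw [polydisc_eq_ball]
    exact and_congr_right fun ht => ⟨lt_nakayamaExponent_of_integrableOn ha ht.le,
      integrableOn_exp_neg_mul_psiN ha ht.le⟩
  rw [hset, csSup_Ioo (nakayamaExponent_pos (by omega))]
  exact ⟨rfl, irrational_nakayamaExponent (by omega)⟩
end

section
/- Let u < v be positive integers. Define N : ℝ² → ℝ³ by N(m₁, m₂) = (1 − m₁ − m₂)·(−u, −u, −u) + m₁·(u+v, u+v, v−2u) + m₂·(v−u, v−u, v+2u), and let Nef = { (a, b, c) ∈ ℝ³ | ab + bc + ca ≥ 0, a + b + c ≥ 0 }. Then { m ∈ ℝ² | m₁ ≥ 0, m₂ ≥ 0, m₁ + m₂ ≤ 1, N(m) ∈ Nef } equals the convex hull in ℝ² of the five points (1,0), (0,1), (0, u/v), (u/(2(u+v)), u/(2(u+v))), (u/v, 0). -/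
/-!
The class `N(m)` has the form `(a, a, c)`, on which the nef conditions `a (a + 2c) ≥ 0`,
`2a + c ≥ 0` are equivalent to the linear conditions `a ≥ 0`, `a + 2c ≥ 0`. Inside the simplex
they cut out the pentagon with the five given vertices. Being an intersection of half-planes,
the pentagon is convex, so it contains the hull; conversely it is the union of the triangles
fanned out from the vertex `(1, 0)`, and a point of each triangle is an explicit convex
combination of its corners.
-/

open Set

theorem Convex.smul_add_smul_add_smul_mem {𝕜 E : Type*} [Field 𝕜] [LinearOrder 𝕜]
    [IsStrictOrderedRing 𝕜] [AddCommGroup E] [Module 𝕜 E] {s : Set E} (hs : Convex 𝕜 s)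
    {x y z : E} (hx : x ∈ s) (hy : y ∈ s) (hz : z ∈ s) {a b c : 𝕜}
    (ha : 0 ≤ a) (hb : 0 ≤ b) (hc : 0 ≤ c) (habc : a + b + c = 1) :
    a • x + b • y + c • z ∈ s := by
  rcases (add_nonneg ha hb).eq_or_lt with hab | hab
  · obtain ⟨rfl, rfl⟩ : a = 0 ∧ b = 0 := by constructor <;> linarith
    obtain rfl : c = 1 := by linarith
    simpa using hz
  have hxy : (a / (a + b)) • x + (b / (a + b)) • y ∈ s :=
    hs hx hy (by positivity) (by positivity) (by rw [← add_div, div_self hab.ne'])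
  convert hs hxy hz hab.le hc habc using 1
  simp only [smul_add, smul_smul, mul_div_cancel₀ _ hab.ne']

theorem nonneg_and_nonneg_of_mul_nonneg_of_add_nonneg {R : Type*} [Field R] [LinearOrder R]
    [IsStrictOrderedRing R] {a b : R} (hab : 0 ≤ a * b) (hs : 0 ≤ a + b) : 0 ≤ a ∧ 0 ≤ b := by
  rcases nonneg_and_nonneg_or_nonpos_and_nonpos_of_mul_nonneg hab with h | ⟨ha, hb⟩
  · exact h
  · constructor <;> linarith

theorem nef_diag_iff (a c : ℝ) :
    (0 ≤ a * a + a * c + c * a ∧ 0 ≤ a + a + c) ↔ 0 ≤ a ∧ 0 ≤ a + 2 * c := by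
  constructor
  · rintro ⟨hq, hs⟩
    have h := nonneg_and_nonneg_of_mul_nonneg_of_add_nonneg (a := 3 * a) (b := a + 2 * c)
      (by nlinarith) (by linarith)
    exact ⟨by linarith [h.1], h.2⟩
  · rintro ⟨ha, hac⟩
    exact ⟨by nlinarith [mul_nonneg ha hac], by linarith⟩

def nefPentagon (u v : ℝ) : Set (ℝ × ℝ) :=
  {m | 0 ≤ m.1 ∧ 0 ≤ m.2 ∧ m.1 + m.2 ≤ 1 ∧
    u ≤ (2 * u + v) * m.1 + v * m.2 ∧ u ≤ v * m.1 + (v + 2 * u) * m.2}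

theorem convex_nefPentagon (u v : ℝ) : Convex ℝ (nefPentagon u v) := by
  rintro ⟨p₁, p₂⟩ ⟨hp₁, hp₂, hp, hpA, hpB⟩ ⟨q₁, q₂⟩ ⟨hq₁, hq₂, hq, hqA, hqB⟩ a b ha hb hab
  have hu_eq : u = a * u + b * u := by rw [← add_mul, hab, one_mul]
  simp only [nefPentagon, mem_ofPred_eq, Prod.smul_mk, Prod.mk_add_mk, smul_eq_mul]
  refine ⟨by positivity, by positivity, ?_, ?_, ?_⟩
  · nlinarith [mul_le_mul_of_nonneg_left hp ha, mul_le_mul_of_nonneg_left hq hb]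
  · nlinarith [mul_le_mul_of_nonneg_left hpA ha, mul_le_mul_of_nonneg_left hqA hb]
  · nlinarith [mul_le_mul_of_nonneg_left hpB ha, mul_le_mul_of_nonneg_left hqB hb]

theorem nefPentagon_vertices_subset {u v : ℝ} (hu : 0 < u) (huv : u < v) :
    {(1, 0), (0, 1), (0, u / v), (u / (2 * (u + v)), u / (2 * (u + v))), (u / v, 0)}
      ⊆ nefPentagon u v := by
  have hv : 0 < v := hu.trans huv
  simp only [insert_subset_iff, singleton_subset_iff, nefPentagon, mem_ofPred_eq]
  refine ⟨?_, ?_, ?_, ?_, ?_⟩ <;> refine ⟨?_, ?_, ?_, ?_, ?_⟩ <;> (try field_simp) <;> nlinarith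

theorem nefPentagon_subset_convexHull {u v : ℝ} (hu : 0 < u) (huv : u < v) :
    nefPentagon u v ⊆
      convexHull ℝ
        {(1, 0), (0, 1), (0, u / v), (u / (2 * (u + v)), u / (2 * (u + v))), (u / v, 0)} := by
  rintro ⟨m₁, m₂⟩ ⟨h₁, h₂, hm, hA, hB⟩
  have hv : 0 < v := hu.trans huv
  have hvu : 0 < v - u := sub_pos.2 huv
  -- the lines from `(1, 0)` to `(0, u / v)` and to the diagonal vertex cut out three triangles
  rcases le_or_gt u (u * m₁ + v * m₂) with h₁₃ | h₁₃
  · have key : ((m₁, m₂) : ℝ × ℝ) = m₁ • ((1 : ℝ), (0 : ℝ))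
        + ((u * m₁ + v * m₂ - u) / (v - u)) • ((0 : ℝ), (1 : ℝ))
        + ((v * (1 - m₁ - m₂)) / (v - u)) • ((0 : ℝ), u / v) := by
      ext <;> simp only [Prod.fst_add, Prod.snd_add, Prod.smul_fst, Prod.smul_snd, smul_eq_mul] <;>
        field_simp <;> ring
    rw [key]
    exact (convex_convexHull ℝ _).smul_add_smul_add_smul_mem
      (subset_convexHull ℝ _ (by simp)) (subset_convexHull ℝ _ (by simp))
      (subset_convexHull ℝ _ (by simp)) h₁
      (div_nonneg (by linarith) hvu.le) (div_nonneg (by nlinarith) hvu.le)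
      (by field_simp; ring)
  rcases le_or_gt u (u * m₁ + (u + 2 * v) * m₂) with h₁₄ | h₁₄
  · have key : ((m₁, m₂) : ℝ × ℝ)
        = (((2 * u + v) * m₁ + v * m₂ - u) / (u + v)) • ((1 : ℝ), (0 : ℝ))
        + ((v * (u * m₁ + (u + 2 * v) * m₂ - u)) / (u * (u + v))) • ((0 : ℝ), u / v)
        + ((-2 * (u * m₁ + v * m₂ - u)) / u) • (u / (2 * (u + v)), u / (2 * (u + v))) := by
      ext <;> simp only [Prod.fst_add, Prod.snd_add, Prod.smul_fst, Prod.smul_snd, smul_eq_mul] <;>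
        field_simp <;> ring
    rw [key]
    exact (convex_convexHull ℝ _).smul_add_smul_add_smul_mem
      (subset_convexHull ℝ _ (by simp)) (subset_convexHull ℝ _ (by simp))
      (subset_convexHull ℝ _ (by simp))
      (div_nonneg (by linarith) (by positivity)) (div_nonneg (by nlinarith) (by positivity))
      (div_nonneg (by linarith) hu.le) (by field_simp; ring)
  · have key : ((m₁, m₂) : ℝ × ℝ)
        = ((v * m₁ + (v + 2 * u) * m₂ - u) / (v - u)) • ((1 : ℝ), (0 : ℝ))
        + ((2 * (u + v) * m₂) / u) • (u / (2 * (u + v)), u / (2 * (u + v)))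
        + ((-v * (u * m₁ + (u + 2 * v) * m₂ - u)) / (u * (v - u))) • (u / v, (0 : ℝ)) := by
      ext <;> simp only [Prod.fst_add, Prod.snd_add, Prod.smul_fst, Prod.smul_snd, smul_eq_mul] <;>
        field_simp <;> ring
    rw [key]
    exact (convex_convexHull ℝ _).smul_add_smul_add_smul_mem
      (subset_convexHull ℝ _ (by simp)) (subset_convexHull ℝ _ (by simp))
      (subset_convexHull ℝ _ (by simp))
      (div_nonneg (by linarith) hvu.le) (div_nonneg (by positivity) hu.le)
      (div_nonneg (by nlinarith) (by positivity)) (by field_simp; ring)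

theorem nefPentagon_eq_convexHull {u v : ℝ} (hu : 0 < u) (huv : u < v) :
    nefPentagon u v =
      convexHull ℝ
        {(1, 0), (0, 1), (0, u / v), (u / (2 * (u + v)), u / (2 * (u + v))), (u / v, 0)} :=
  (nefPentagon_subset_convexHull hu huv).antisymm
    (convexHull_min (nefPentagon_vertices_subset hu huv) (convex_nefPentagon u v))

/-- In Example 6.1 of the paper, the set
`{ m ∈ ℝ² | m₁, m₂ ≥ 0, m₁ + m₂ ≤ 1, N(m) ∈ Nef }` equals the convex hull of the five points
`(1,0), (0,1), (0, u/v), (u/(2(u+v)), u/(2(u+v))), (u/v, 0)`. -/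
theorem stmt_11 (u v : ℕ) (hu : 0 < u) (huv : u < v) :
    {m : ℝ × ℝ | 0 ≤ m.1 ∧ 0 ≤ m.2 ∧ m.1 + m.2 ≤ 1 ∧
      (((1 - m.1 - m.2) * (-(u : ℝ)) + m.1 * ((u : ℝ) + (v : ℝ)) + m.2 * ((v : ℝ) - (u : ℝ)),
        (1 - m.1 - m.2) * (-(u : ℝ)) + m.1 * ((u : ℝ) + (v : ℝ)) + m.2 * ((v : ℝ) - (u : ℝ)),
        (1 - m.1 - m.2) * (-(u : ℝ)) + m.1 * ((v : ℝ) - 2 * (u : ℝ))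
          + m.2 * ((v : ℝ) + 2 * (u : ℝ))) ∈
        {x : ℝ × ℝ × ℝ | 0 ≤ x.1 * x.2.1 + x.2.1 * x.2.2 + x.2.2 * x.1 ∧
          0 ≤ x.1 + x.2.1 + x.2.2})}
    = convexHull ℝ {((1 : ℝ), (0 : ℝ)), ((0 : ℝ), (1 : ℝ)), ((0 : ℝ), (u : ℝ) / (v : ℝ)),
        ((u : ℝ) / (2 * ((u : ℝ) + (v : ℝ))), (u : ℝ) / (2 * ((u : ℝ) + (v : ℝ)))),
        ((u : ℝ) / (v : ℝ), (0 : ℝ))} := by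
  rw [← nefPentagon_eq_convexHull (u := u) (v := v) (by exact_mod_cast hu) (by exact_mod_cast huv)]
  ext m
  simp only [mem_ofPred_eq, nef_diag_iff, nefPentagon]
  -- with `N(m) = (a, a, c)`, `a + 2c = 3 (v m₁ + (v + 2u) m₂ - u)`
  constructor <;> rintro ⟨h₁, h₂, hm, hA, hB⟩ <;> exact ⟨h₁, h₂, hm, by linarith, by linarith⟩
end

section
/- Let u < v be positive integers and t > 0. The function (x, y) ↦ ( |x|^{2(2u+2v)} + |y|^{2(2u+2v)} + |x|^{2v} |y|^{2v} )^{− t u / (2v(u+v))} is integrable on the open unit polydisc { (x,y) ∈ ℂ² | |x| < 1, |y| < 1 } if and only if t < 2(1 + v/u). In particular, sup { t > 0 | this function is integrable } = 2(1 + v/u). -/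
/-!
On the polydisc, which is the unit ball of `ℂ × ℂ` for its sup norm, the weight
`f = ‖x‖^N + ‖y‖^N + ‖x‖^k ‖y‖^k` lies between `‖x‖^k ‖y‖^k` and `3 ‖(x, y)‖^(2k)`, the upper
bound using `2k ≤ N`. So `f^(-s)` is dominated by `‖x‖^(-ks) ‖y‖^(-ks)`, integrable on the
polydisc when `ks < 2`, and dominates `3^(-s) ‖(x, y)‖^(-2ks)`, not integrable near `0 ∈ ℝ⁴`
when `2ks ≥ 4`. Both facts come from the integrability of `r^(d - 1 - α)` on `(0, 1)` in polar
coordinates. With `N = 4u + 4v`, `k = 2v` and `s = tu / (2v(u + v))`, `ks < 2` reads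
`t < 2(1 + v/u)`.
-/

open MeasureTheory Metric Set

section NormRpow

variable {E : Type*} [NormedAddCommGroup E] [NormedSpace ℝ E] [FiniteDimensional ℝ E]
  [Nontrivial E] [MeasurableSpace E] [BorelSpace E] (μ : Measure E) [μ.IsAddHaarMeasure]

theorem integrableOn_ball_norm_rpow_iff {r : ℝ} (hr : 0 < r) (s : ℝ) :
    IntegrableOn (fun x : E => ‖x‖ ^ s) (ball 0 r) μ ↔ -(Module.finrank ℝ E : ℝ) < s := by
  have hd : ((Module.finrank ℝ E - 1 : ℕ) : ℝ) = Module.finrank ℝ E - 1 := by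
    rw [Nat.cast_sub Module.finrank_pos, Nat.cast_one]
  rw [integrableOn_fun_norm_addHaar μ (f := fun y => y ^ s),
    integrableOn_congr_fun (g := fun y => y ^ ((Module.finrank ℝ E : ℝ) - 1 + s)) _
      measurableSet_Ioo,
    intervalIntegral.integrableOn_Ioo_rpow_iff hr]
  · constructor <;> intro h <;> linarith
  · rintro y ⟨hy, -⟩
    simp only [smul_eq_mul]
    rw [← Real.rpow_natCast, hd, Real.rpow_add hy]

variable {F : Type*} [NormedAddCommGroup F] [NormedSpace ℝ F] [FiniteDimensional ℝ F]
  [Nontrivial F] [MeasurableSpace F] [BorelSpace F] (ν : Measure F) [ν.IsAddHaarMeasure]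

theorem integrableOn_ball_norm_fst_rpow_mul_norm_snd_rpow {r s t : ℝ} (hr : 0 < r)
    (hs : -(Module.finrank ℝ E : ℝ) < s) (ht : -(Module.finrank ℝ F : ℝ) < t) :
    IntegrableOn (fun p : E × F => ‖p.1‖ ^ s * ‖p.2‖ ^ t) (ball 0 r) (μ.prod ν) := by
  rw [show (0 : E × F) = (0, 0) from rfl, ← ball_prod_same, IntegrableOn, ← Measure.prod_restrict]
  exact ((integrableOn_ball_norm_rpow_iff μ hr s).2 hs).mul_prod
    ((integrableOn_ball_norm_rpow_iff ν hr t).2 ht)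

end NormRpow

section Weight

variable {N k : ℕ} {a b s : ℝ}

theorem add_pow_add_mul_pow_rpow_neg_le (ha : 0 < a) (hb : 0 < b) (hs : 0 ≤ s) :
    (a ^ N + b ^ N + a ^ k * b ^ k) ^ (-s) ≤ a ^ (-(k * s)) * b ^ (-(k * s)) := by
  calc (a ^ N + b ^ N + a ^ k * b ^ k) ^ (-s) ≤ (a ^ k * b ^ k) ^ (-s) :=
        Real.rpow_le_rpow_of_nonpos (by positivity) (le_add_of_nonneg_left (by positivity))
          (neg_nonpos.2 hs)
    _ = a ^ (-(k * s)) * b ^ (-(k * s)) := by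
        rw [Real.mul_rpow (by positivity) (by positivity), ← mul_neg,
          Real.rpow_natCast_mul ha.le, Real.rpow_natCast_mul hb.le]

theorem add_pow_add_mul_pow_le (hkN : 2 * k ≤ N) (ha : 0 ≤ a) (hb : 0 ≤ b) (ha1 : a ≤ 1)
    (hb1 : b ≤ 1) : a ^ N + b ^ N + a ^ k * b ^ k ≤ 3 * max a b ^ (2 * k) := by
  have hc : 0 ≤ max a b := le_max_of_le_left ha
  have hc1 : max a b ≤ 1 := max_le ha1 hb1
  have hN : ∀ x, 0 ≤ x → x ≤ max a b → x ^ N ≤ max a b ^ (2 * k) := fun x hx hxc =>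
    (pow_le_pow_left₀ hx hxc N).trans (pow_le_pow_of_le_one hc hc1 hkN)
  have hmul : a ^ k * b ^ k ≤ max a b ^ (2 * k) := by
    rw [two_mul, pow_add]
    exact mul_le_mul (pow_le_pow_left₀ ha (le_max_left a b) k)
      (pow_le_pow_left₀ hb (le_max_right a b) k) (by positivity) (by positivity)
  linarith [hN a ha (le_max_left a b), hN b hb (le_max_right a b)]

theorem max_rpow_le_rpow_mul_add_pow_add_mul_pow_rpow_neg (hkN : 2 * k ≤ N) (ha : 0 < a)
    (hb : 0 < b) (ha1 : a ≤ 1) (hb1 : b ≤ 1) (hs : 0 ≤ s) :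
    max a b ^ (-(2 * k * s)) ≤ 3 ^ s * (a ^ N + b ^ N + a ^ k * b ^ k) ^ (-s) := by
  have hc : 0 < max a b := lt_max_of_lt_left ha
  calc max a b ^ (-(2 * k * s)) = 3 ^ s * (3 * max a b ^ (2 * k)) ^ (-s) := by
        rw [Real.mul_rpow (by norm_num) (by positivity), ← mul_assoc, ← Real.rpow_add (by norm_num),
          add_neg_cancel, Real.rpow_zero, one_mul, ← Real.rpow_natCast_mul hc.le, mul_neg]
        push_cast
        ring_nf
    _ ≤ 3 ^ s * (a ^ N + b ^ N + a ^ k * b ^ k) ^ (-s) := by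
        refine mul_le_mul_of_nonneg_left ?_ (by positivity)
        exact Real.rpow_le_rpow_of_nonpos (by positivity)
          (add_pow_add_mul_pow_le hkN ha.le hb.le ha1 hb1) (neg_nonpos.2 hs)

end Weight

theorem integrableOn_ball_add_pow_add_mul_pow_rpow_neg_iff {N k : ℕ} (hkN : 2 * k ≤ N) {s : ℝ}
    (hs : 0 ≤ s) :
    IntegrableOn
        (fun p : ℂ × ℂ => (‖p.1‖ ^ N + ‖p.2‖ ^ N + ‖p.1‖ ^ k * ‖p.2‖ ^ k) ^ (-s)) (ball 0 1)
      ↔ k * s < 2 := by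
  have hfinrank : Module.finrank ℝ ℂ = 2 := Complex.finrank_real_complex
  have hmeas : AEStronglyMeasurable
      (fun p : ℂ × ℂ => (‖p.1‖ ^ N + ‖p.2‖ ^ N + ‖p.1‖ ^ k * ‖p.2‖ ^ k) ^ (-s))
      (volume.restrict (ball 0 1)) :=
    (by fun_prop : Measurable _).aestronglyMeasurable
  have hae : ∀ᵐ p ∂(volume.restrict (ball (0 : ℂ × ℂ) 1)),
      p ∈ ball 0 1 ∧ 0 < ‖p.1‖ ∧ 0 < ‖p.2‖ := by
    refine (ae_restrict_mem measurableSet_ball).and (ae_restrict_of_ae ?_)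
    rw [Measure.volume_eq_prod]
    filter_upwards [Measure.quasiMeasurePreserving_fst.ae (Measure.ae_ne volume (0 : ℂ)),
      Measure.quasiMeasurePreserving_snd.ae (Measure.ae_ne volume (0 : ℂ))] with p h1 h2
    exact ⟨norm_pos_iff.2 h1, norm_pos_iff.2 h2⟩
  constructor
  · intro hF
    have hnorm : IntegrableOn (fun p : ℂ × ℂ => ‖p‖ ^ (-(2 * k * s))) (ball 0 1) := by
      refine (hF.const_mul (3 ^ s)).mono' (by fun_prop : Measurable _).aestronglyMeasurable
        (hae.mono fun p ⟨hp, h1, h2⟩ => ?_)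
      have hp1 := mem_ball_zero_iff.1 hp
      rw [Real.norm_of_nonneg (by positivity), Prod.norm_def]
      exact max_rpow_le_rpow_mul_add_pow_add_mul_pow_rpow_neg hkN h1 h2
        ((norm_fst_le p).trans hp1.le) ((norm_snd_le p).trans hp1.le) hs
    rw [Measure.volume_eq_prod] at hnorm
    have := (integrableOn_ball_norm_rpow_iff (volume.prod volume) one_pos _).1 hnorm
    rw [Module.finrank_prod, hfinrank] at this
    push_cast at this
    linarith
  · intro hks
    have hbound : -(Module.finrank ℝ ℂ : ℝ) < -(k * s) := by rw [hfinrank]; push_cast; linarith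
    refine (integrableOn_ball_norm_fst_rpow_mul_norm_snd_rpow volume volume one_pos hbound
      hbound).mono' hmeas (hae.mono fun p ⟨_, h1, h2⟩ => ?_)
    rw [Real.norm_of_nonneg (by positivity)]
    exact add_pow_add_mul_pow_rpow_neg_le h1 h2 hs

/-- In Example 6.1 of the paper, the function
`(x,y) ↦ (|x|^{2(2u+2v)} + |y|^{2(2u+2v)} + |x|^{2v}|y|^{2v})^{-tu/(2v(u+v))}`
is integrable on the open unit polydisc iff `t < 2(1 + v/u)`; in particular the supremum of
such `t` is `2(1 + v/u)`. -/
theorem stmt_12 (u v : ℕ) (hu : 0 < u) (huv : u < v) :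
    (∀ t : ℝ, 0 < t →
      (IntegrableOn
          (fun x : ℂ × ℂ =>
            (‖x.1‖ ^ (2 * (2 * u + 2 * v)) + ‖x.2‖ ^ (2 * (2 * u + 2 * v)) +
              ‖x.1‖ ^ (2 * v) * ‖x.2‖ ^ (2 * v)) ^
                (-(t * (u : ℝ) / (2 * (v : ℝ) * ((u : ℝ) + (v : ℝ))))))
          {x : ℂ × ℂ | ‖x.1‖ < 1 ∧ ‖x.2‖ < 1} volume
        ↔ t < 2 * (1 + (v : ℝ) / (u : ℝ)))) ∧
    sSup {t : ℝ | 0 < t ∧ IntegrableOn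
        (fun x : ℂ × ℂ =>
          (‖x.1‖ ^ (2 * (2 * u + 2 * v)) + ‖x.2‖ ^ (2 * (2 * u + 2 * v)) +
            ‖x.1‖ ^ (2 * v) * ‖x.2‖ ^ (2 * v)) ^
              (-(t * (u : ℝ) / (2 * (v : ℝ) * ((u : ℝ) + (v : ℝ))))))
        {x : ℂ × ℂ | ‖x.1‖ < 1 ∧ ‖x.2‖ < 1} volume}
      = 2 * (1 + (v : ℝ) / (u : ℝ)) := by
  have hu' : (0 : ℝ) < u := Nat.cast_pos.2 hu
  have hv' : (0 : ℝ) < v := Nat.cast_pos.2 (hu.trans huv)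
  have hpolydisc : {x : ℂ × ℂ | ‖x.1‖ < 1 ∧ ‖x.2‖ < 1} = ball 0 1 := by
    ext x
    simp [Prod.norm_def]
  have hexponent (t : ℝ) :
      ((2 * v : ℕ) : ℝ) * (t * u / (2 * v * (u + v))) < 2 ↔ t < 2 * (1 + (v : ℝ) / u) := by
    rw [show ((2 * v : ℕ) : ℝ) * (t * u / (2 * v * (u + v))) = t * u / (u + v) by
        push_cast; field_simp,
      show 2 * (1 + (v : ℝ) / u) = 2 * (u + v) / u by field_simp,
      div_lt_iff₀ (by positivity), lt_div_iff₀ hu']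
  have hcriterion (t : ℝ) (ht : 0 < t) :=
    (integrableOn_ball_add_pow_add_mul_pow_rpow_neg_iff (N := 2 * (2 * u + 2 * v)) (k := 2 * v)
      (s := t * u / (2 * v * (u + v))) (by omega) (by positivity)).trans (hexponent t)
  rw [hpolydisc]
  refine ⟨hcriterion, ?_⟩
  rw [show {t : ℝ | 0 < t ∧ _} = Ioo 0 (2 * (1 + (v : ℝ) / u)) from
    ext fun t => ⟨fun ⟨ht, h⟩ => ⟨ht, (hcriterion t ht).1 h⟩,
      fun ⟨ht, h⟩ => ⟨ht, (hcriterion t ht).2 h⟩⟩]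
  exact csSup_Ioo (by positivity)
end

section
/- Define N : ℝ² → ℝ³ by N(m₁, m₂) = (1 − m₁ − m₂)·(4, 4, 1) + m₂·(−1, 9, 1), and let Nef = { (a, b, c) ∈ ℝ³ | ab + bc + ca ≥ 0, a + b + c ≥ 0 }. Then { m ∈ ℝ² | m₁ ≥ 0, m₂ ≥ 0, m₁ + m₂ ≤ 1, N(m) ∈ Nef } equals the convex hull in ℝ² of the three points (0, 0), (1, 0), (0, 2√6/5). -/
/-!
Writing `u = 1 - m₁`, the class is `N(m) = (4u - 5m₂, 4u + 5m₂, u)`, so the two inequalities cutting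
out the nef cone read `24u² - 25m₂² ≥ 0` and `9u ≥ 0`. For `m₂ ≥ 0` together they say exactly
`m₂ ≤ (2√6/5) u`, a half-plane; intersected with the quadrant it is the right triangle with legs
`1` and `2√6/5`, and the condition `m₁ + m₂ ≤ 1` is implied because `2√6/5 < 1`.
-/

namespace EllipticSquare

/-- The nef cone of `E × E` in the coordinates `(f₁, f₂, δ)`. -/
def nefCone : Set (ℝ × ℝ × ℝ) :=
  {x | 0 ≤ x.1 * x.2.1 + x.2.1 * x.2.2 + x.2.2 * x.1 ∧ 0 ≤ x.1 + x.2.1 + x.2.2}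

/-- The class `N(m)` of `L₀ ⊗ 𝓛^m`, where `c₁(L₀) = (4, 4, 1)`, `c₁(L₁) = 0`, `c₁(L₂) = (-1, 9, 1)`. -/
def twistedClass (m : ℝ × ℝ) : ℝ × ℝ × ℝ :=
  ((1 - m.1 - m.2) * 4 + m.2 * (-1), (1 - m.1 - m.2) * 4 + m.2 * 9,
    (1 - m.1 - m.2) * 1 + m.2 * 1)

theorem twistedClass_mem_nefCone_iff (m : ℝ × ℝ) :
    twistedClass m ∈ nefCone ↔ m.2 ^ 2 ≤ 24 / 25 * (1 - m.1) ^ 2 ∧ 0 ≤ 1 - m.1 := by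
  simp only [twistedClass, nefCone, Set.mem_ofPred_eq]
  constructor <;> rintro ⟨hq, hs⟩ <;> constructor <;> linarith

end EllipticSquare

theorem sq_le_mul_sq_and_nonneg_iff {x c u : ℝ} (hx : 0 ≤ x) (hc : 0 < c) :
    x ^ 2 ≤ c ^ 2 * u ^ 2 ∧ 0 ≤ u ↔ x ≤ c * u := by
  rw [← mul_pow]
  constructor
  · rintro ⟨hsq, hu⟩
    exact (sq_le_sq₀ hx (by positivity)).mp hsq
  · intro h
    have hu : 0 ≤ u := nonneg_of_mul_nonneg_right (hx.trans h) hc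
    exact ⟨(sq_le_sq₀ hx (by positivity)).mpr h, hu⟩

theorem convex_setOf_triangle (a b : ℝ) :
    Convex ℝ {m : ℝ × ℝ | 0 ≤ m.1 ∧ 0 ≤ m.2 ∧ b * m.1 + a * m.2 ≤ a * b} :=
  (convex_halfSpace_ge (LinearMap.fst ℝ ℝ ℝ).isLinear 0).inter <|
    (convex_halfSpace_ge (LinearMap.snd ℝ ℝ ℝ).isLinear 0).inter <|
      convex_halfSpace_le (b • LinearMap.fst ℝ ℝ ℝ + a • LinearMap.snd ℝ ℝ ℝ).isLinear _

theorem convexHull_triangle {a b : ℝ} (ha : 0 < a) (hb : 0 < b) :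
    convexHull ℝ {((0 : ℝ), (0 : ℝ)), (a, 0), (0, b)} =
      {m : ℝ × ℝ | 0 ≤ m.1 ∧ 0 ≤ m.2 ∧ b * m.1 + a * m.2 ≤ a * b} := by
  refine (convexHull_min ?_ (convex_setOf_triangle a b)).antisymm ?_
  · rintro p (rfl | rfl | rfl) <;> refine ⟨?_, ?_, ?_⟩ <;> dsimp only <;> nlinarith
  · rintro ⟨x, y⟩ ⟨hx, hy, hxy⟩
    dsimp only at hx hy hxy
    have hsum : x / a + y / b ≤ 1 := by
      rw [div_add_div _ _ ha.ne' hb.ne', div_le_one (by positivity)]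
      linarith
    have hcomb := (convex_convexHull ℝ {((0 : ℝ), (0 : ℝ)), (a, 0), (0, b)}).sum_mem
      (t := Finset.univ) (w := ![1 - x / a - y / b, x / a, y / b])
      (z := ![((0 : ℝ), (0 : ℝ)), (a, 0), (0, b)]) ?_ ?_ ?_
    · convert hcomb using 1
      simp [Fin.sum_univ_three, ha.ne', hb.ne']
    · intro i _
      fin_cases i
      · show 0 ≤ 1 - x / a - y / b
        linarith
      · show 0 ≤ x / a
        exact div_nonneg hx ha.le
      · show 0 ≤ y / b
        exact div_nonneg hy hb.le
    · rw [Fin.sum_univ_three]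
      show 1 - x / a - y / b + x / a + y / b = 1
      ring
    · intro i _
      apply subset_convexHull
      fin_cases i <;> simp

/-- In Example 6.3 of the paper, the set
`{ m ∈ ℝ² | m₁, m₂ ≥ 0, m₁ + m₂ ≤ 1, N(m) ∈ Nef }` equals the convex hull of the three points
`(0,0), (1,0), (0, 2√6/5)`. -/
theorem stmt_14 :
    {m : ℝ × ℝ | 0 ≤ m.1 ∧ 0 ≤ m.2 ∧ m.1 + m.2 ≤ 1 ∧
      (((1 - m.1 - m.2) * 4 + m.2 * (-1),
        (1 - m.1 - m.2) * 4 + m.2 * 9,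
        (1 - m.1 - m.2) * 1 + m.2 * 1) ∈
        {x : ℝ × ℝ × ℝ | 0 ≤ x.1 * x.2.1 + x.2.1 * x.2.2 + x.2.2 * x.1 ∧
          0 ≤ x.1 + x.2.1 + x.2.2})}
    = convexHull ℝ {((0 : ℝ), (0 : ℝ)), ((1 : ℝ), (0 : ℝ)),
        ((0 : ℝ), 2 * Real.sqrt 6 / 5)} := by
  set h := 2 * Real.sqrt 6 / 5
  have hsq_h : h ^ 2 = 24 / 25 := by
    rw [div_pow, mul_pow, Real.sq_sqrt (by norm_num)]
    norm_num
  have hpos : 0 < h := by positivity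
  have hlt : h < 1 := (sq_lt_one_iff₀ hpos.le).mp (by rw [hsq_h]; norm_num)
  rw [convexHull_triangle one_pos hpos]
  ext m
  change (_ ∧ _ ∧ _ ∧ EllipticSquare.twistedClass m ∈ EllipticSquare.nefCone) ↔ _
  rw [EllipticSquare.twistedClass_mem_nefCone_iff, ← hsq_h]
  constructor
  · rintro ⟨hm₁, hm₂, -, hnef⟩
    rw [sq_le_mul_sq_and_nonneg_iff hm₂ hpos] at hnef
    exact ⟨hm₁, hm₂, by linarith⟩
  · rintro ⟨hm₁, hm₂, hm⟩
    refine ⟨hm₁, hm₂, by nlinarith, ?_⟩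
    rw [sq_le_mul_sq_and_nonneg_iff hm₂ hpos]
    linarith
end

section
/- Let α = 1 − 2√6/5 (a positive irrational real number). For every p, q ∈ ℕ and every t > 0, the function (x, y) ↦ |x|^{2p} |y|^{2q} ( |x|^{2α} + |y|² )^{−t} is integrable on the open unit polydisc { (x,y) ∈ ℂ² | |x| < 1, |y| < 1 } if and only if t < (p+1)/α + (q+1). In particular, sup { t > 0 | (x,y) ↦ (|x|^{2α} + |y|²)^{−t} is integrable on the open unit polydisc } = 1 + 1/α. -/
/-!
In polar coordinates in each variable, the integral of `|x|^{2p} |y|^{2q} (|x|^{2α} + |y|²)^{-t}`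
over the polydisc is `(2π)²` times `∫∫_{(0,1)²} r^a s^b (r^c + s^d)^{-t} ds dr` with `a = 2p+1`,
`b = 2q+1`, `c = 2α`, `d = 2`, and this is finite iff `t < (a+1)/c + (b+1)/d`. If so, split
`t = x + y` with `cx < a+1` and `dy < b+1`; then `(r^c + s^d)^{-t} ≤ r^{-cx} s^{-dy}` bounds the
integrand by a product of integrable powers. Otherwise restrict to `s < r^{c/d}`, where
`r^c + s^d ≤ 2r^c`: integrating in `s` first leaves a multiple of
`∫₀¹ r^{a - ct + (c/d)(b+1)} dr = ∞`.
-/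

open MeasureTheory Set Real
open scoped ENNReal

theorem lintegral_comp_norm_complex {f : ℝ → ℝ≥0∞} (hf : Measurable f) :
    ∫⁻ z : ℂ, f ‖z‖ = ENNReal.ofReal (2 * π) * ∫⁻ r in Ioi 0, ENNReal.ofReal r * f r := by
  rw [← Complex.lintegral_comp_polarCoord_symm]
  simp only [Complex.norm_polarCoord_symm, smul_eq_mul]
  rw [polarCoord_target, Measure.volume_eq_prod, ← Measure.prod_restrict,
    lintegral_prod _ (by fun_prop), ← lintegral_const_mul' _ _ ENNReal.ofReal_ne_top]
  refine setLIntegral_congr_fun measurableSet_Ioi fun r (hr : 0 < r) => ?_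
  dsimp only
  rw [abs_of_pos hr, setLIntegral_const, Real.volume_Ioo]
  ring_nf

theorem lintegral_unitBall_comp_norm_complex {f : ℝ → ℝ≥0∞} (hf : Measurable f) :
    ∫⁻ z in {z : ℂ | ‖z‖ < 1}, f ‖z‖
      = ENNReal.ofReal (2 * π) * ∫⁻ r in Ioo 0 1, ENNReal.ofReal r * f r := by
  have hball : MeasurableSet {z : ℂ | ‖z‖ < 1} := measurableSet_lt (by fun_prop) measurable_const
  rw [← lintegral_indicator hball, ← Ioi_inter_Iio, inter_comm,
    ← Measure.restrict_restrict measurableSet_Iio, ← lintegral_indicator measurableSet_Iio]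
  simp only [indicator_mul_right]
  exact (lintegral_congr fun z => indicator_comp_right (s := Iio (1 : ℝ)) (g := f) (‖·‖)).trans
    (lintegral_comp_norm_complex (hf.indicator measurableSet_Iio))

theorem lintegral_unitPolydisc_comp_norm {F : ℝ → ℝ → ℝ≥0∞}
    (hF : Measurable (Function.uncurry F)) :
    ∫⁻ z in {z : ℂ × ℂ | ‖z.1‖ < 1 ∧ ‖z.2‖ < 1}, F ‖z.1‖ ‖z.2‖
      = ENNReal.ofReal (2 * π) ^ 2 *
          ∫⁻ r in Ioo 0 1, ∫⁻ s in Ioo 0 1, ENNReal.ofReal (r * s) * F r s := by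
  have inner (x : ℂ) : ∫⁻ y in {z : ℂ | ‖z‖ < 1}, F ‖x‖ ‖y‖
      = ENNReal.ofReal (2 * π) * ∫⁻ s in Ioo 0 1, ENNReal.ofReal s * F ‖x‖ s :=
    lintegral_unitBall_comp_norm_complex (hF.comp measurable_prodMk_left)
  have hmeas : Measurable fun r => ∫⁻ s in Ioo 0 1, ENNReal.ofReal s * F r s :=
    (measurable_snd.ennreal_ofReal.mul hF).lintegral_prod_right'
  rw [show {z : ℂ × ℂ | ‖z.1‖ < 1 ∧ ‖z.2‖ < 1} = {z : ℂ | ‖z‖ < 1} ×ˢ {z : ℂ | ‖z‖ < 1} from rfl,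
    Measure.volume_eq_prod, ← Measure.prod_restrict, lintegral_prod _ (by fun_prop)]
  simp only [inner]
  rw [lintegral_const_mul' _ _ ENNReal.ofReal_ne_top, lintegral_unitBall_comp_norm_complex hmeas,
    pow_two, mul_assoc]
  congr 2
  refine setLIntegral_congr_fun measurableSet_Ioo fun r hr => ?_
  rw [← lintegral_const_mul' _ _ ENNReal.ofReal_ne_top]
  refine setLIntegral_congr_fun measurableSet_Ioo fun s hs => ?_
  rw [ENNReal.ofReal_mul hr.1.le, mul_assoc]

theorem integrableOn_unitPolydisc_comp_norm_iff {g : ℝ → ℝ → ℝ}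
    (hg : Measurable (Function.uncurry g)) :
    IntegrableOn (fun z : ℂ × ℂ => g ‖z.1‖ ‖z.2‖) {z | ‖z.1‖ < 1 ∧ ‖z.2‖ < 1} ↔
      ∫⁻ r in Ioo 0 1, ∫⁻ s in Ioo 0 1, ENNReal.ofReal (r * s) * ‖g r s‖ₑ < ⊤ := by
  have hmeas : Measurable fun z : ℂ × ℂ => g ‖z.1‖ ‖z.2‖ :=
    hg.comp (measurable_norm.prodMap measurable_norm)
  rw [IntegrableOn, Integrable, hasFiniteIntegral_iff_enorm,
    and_iff_right hmeas.aestronglyMeasurable,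
    lintegral_unitPolydisc_comp_norm (F := fun r s => ‖g r s‖ₑ) hg.enorm]
  simp [lt_top_iff_ne_top, ENNReal.mul_eq_top, Real.pi_pos]

theorem lintegral_Ioo_rpow_lt_top_iff {e : ℝ} :
    ∫⁻ r in Ioo 0 1, ENNReal.ofReal (r ^ e) < ⊤ ↔ -1 < e := by
  rw [lt_top_iff_ne_top, lintegral_ofReal_ne_top_iff_integrable (by fun_prop)
    ((ae_restrict_iff' measurableSet_Ioo).2 (ae_of_all _ fun r hr => rpow_nonneg hr.1.le e)),
    ← IntegrableOn, intervalIntegral.integrableOn_Ioo_rpow_iff one_pos]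

theorem lintegral_Ioo_rpow {e u : ℝ} (he : -1 < e) (hu : 0 < u) :
    ∫⁻ s in Ioo 0 u, ENNReal.ofReal (s ^ e) = ENNReal.ofReal (u ^ (e + 1) / (e + 1)) := by
  rw [← ofReal_integral_eq_lintegral_ofReal
    ((intervalIntegral.integrableOn_Ioo_rpow_iff hu).2 he)
    ((ae_restrict_iff' measurableSet_Ioo).2 (ae_of_all _ fun r hr => rpow_nonneg hr.1.le e)),
    ← integral_Ioc_eq_integral_Ioo, ← intervalIntegral.integral_of_le hu.le,
    integral_rpow (Or.inl he), zero_rpow (by linarith), sub_zero]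

theorem exists_add_eq_of_lt_add {P Q t : ℝ} (hP : 0 < P) (hQ : 0 < Q) (ht : 0 ≤ t)
    (htPQ : t < P + Q) : ∃ x y, 0 ≤ x ∧ 0 ≤ y ∧ x < P ∧ y < Q ∧ x + y = t := by
  have hPQ : 0 < P + Q := by positivity
  have hlt : t / (P + Q) < 1 := (div_lt_one hPQ).2 htPQ
  refine ⟨t / (P + Q) * P, t / (P + Q) * Q, by positivity, by positivity,
    mul_lt_of_lt_one_left hP hlt, mul_lt_of_lt_one_left hQ hlt, ?_⟩
  rw [← mul_add, div_mul_cancel₀ _ hPQ.ne']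

theorem add_rpow_neg_le_rpow_neg_mul_rpow_neg {A B x y : ℝ} (hA : 0 < A) (hB : 0 < B)
    (hx : 0 ≤ x) (hy : 0 ≤ y) : (A + B) ^ (-(x + y)) ≤ A ^ (-x) * B ^ (-y) := by
  have h : A ^ x * B ^ y ≤ (A + B) ^ (x + y) := by
    rw [rpow_add (by positivity)]
    gcongr <;> linarith
  rw [rpow_neg (by positivity), rpow_neg hA.le, rpow_neg hB.le, ← mul_inv]
  exact inv_anti₀ (by positivity) h

section UnitSquare

variable {a b c d t : ℝ}

theorem lintegral_unitSquare_lt_top (ha : -1 < a) (hb : -1 < b) (hc : 0 < c) (hd : 0 < d)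
    (ht : 0 ≤ t) (htab : t < (a + 1) / c + (b + 1) / d) :
    ∫⁻ r in Ioo 0 1, ∫⁻ s in Ioo 0 1,
      ENNReal.ofReal (r ^ a * s ^ b * (r ^ c + s ^ d) ^ (-t)) < ⊤ := by
  obtain ⟨x, y, hx, hy, hxa, hyb, rfl⟩ :=
    exists_add_eq_of_lt_add (div_pos (by linarith) hc) (div_pos (by linarith) hd) ht htab
  have hA : -1 < a + c * -x := by nlinarith [(lt_div_iff₀ hc).1 hxa]
  have hB : -1 < b + d * -y := by nlinarith [(lt_div_iff₀ hd).1 hyb]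
  have bound : ∀ r ∈ Ioo (0 : ℝ) 1, ∀ s ∈ Ioo (0 : ℝ) 1,
      r ^ a * s ^ b * (r ^ c + s ^ d) ^ (-(x + y)) ≤ r ^ (a + c * -x) * s ^ (b + d * -y) := by
    rintro r ⟨hr, -⟩ s ⟨hs, -⟩
    calc r ^ a * s ^ b * (r ^ c + s ^ d) ^ (-(x + y))
        ≤ r ^ a * s ^ b * ((r ^ c) ^ (-x) * (s ^ d) ^ (-y)) := by
          refine mul_le_mul_of_nonneg_left ?_ (by positivity)
          exact add_rpow_neg_le_rpow_neg_mul_rpow_neg (by positivity) (by positivity) hx hy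
      _ = r ^ (a + c * -x) * s ^ (b + d * -y) := by
          rw [← rpow_mul hr.le, ← rpow_mul hs.le, rpow_add hr, rpow_add hs]
          ring
  calc ∫⁻ r in Ioo 0 1, ∫⁻ s in Ioo 0 1,
        ENNReal.ofReal (r ^ a * s ^ b * (r ^ c + s ^ d) ^ (-(x + y)))
      ≤ ∫⁻ r in Ioo 0 1, ∫⁻ s in Ioo 0 1,
          ENNReal.ofReal (r ^ (a + c * -x)) * ENNReal.ofReal (s ^ (b + d * -y)) := by
        refine setLIntegral_mono' measurableSet_Ioo fun r hr => ?_
        refine setLIntegral_mono' measurableSet_Ioo fun s hs => ?_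
        rw [← ENNReal.ofReal_mul (rpow_nonneg hr.1.le _)]
        exact ENNReal.ofReal_le_ofReal (bound r hr s hs)
    _ = (∫⁻ r in Ioo 0 1, ENNReal.ofReal (r ^ (a + c * -x))) *
          ∫⁻ s in Ioo 0 1, ENNReal.ofReal (s ^ (b + d * -y)) :=
        lintegral_lintegral_mul (by fun_prop) (by fun_prop)
    _ < ⊤ := ENNReal.mul_lt_top (lintegral_Ioo_rpow_lt_top_iff.2 hA)
        (lintegral_Ioo_rpow_lt_top_iff.2 hB)

theorem ofReal_mul_rpow_le_lintegral_Ioo {r : ℝ} (hb : -1 < b) (hc : 0 < c) (hd : 0 < d)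
    (ht : 0 ≤ t) (hr : r ∈ Ioo 0 1) :
    ENNReal.ofReal (2 ^ (-t) / (b + 1) * r ^ (a + c * -t + c / d * (b + 1))) ≤
      ∫⁻ s in Ioo 0 1, ENNReal.ofReal (r ^ a * s ^ b * (r ^ c + s ^ d) ^ (-t)) := by
  obtain ⟨hr0, hr1⟩ := hr
  have hb1 : 0 < b + 1 := by linarith
  have bound : ∀ s ∈ Ioo 0 (r ^ (c / d)),
      2 ^ (-t) * r ^ (a + c * -t) * s ^ b ≤ r ^ a * s ^ b * (r ^ c + s ^ d) ^ (-t) := by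
    rintro s ⟨hs, hsr⟩
    have hsd : s ^ d ≤ r ^ c := by
      calc s ^ d ≤ (r ^ (c / d)) ^ d := rpow_le_rpow hs.le hsr.le hd.le
        _ = r ^ c := by rw [← rpow_mul hr0.le, div_mul_cancel₀ _ hd.ne']
    calc 2 ^ (-t) * r ^ (a + c * -t) * s ^ b = r ^ a * s ^ b * (2 * r ^ c) ^ (-t) := by
          rw [mul_rpow zero_le_two (by positivity), ← rpow_mul hr0.le, rpow_add hr0]
          ring
      _ ≤ r ^ a * s ^ b * (r ^ c + s ^ d) ^ (-t) := by
          gcongr ?_ * ?_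
          exact rpow_le_rpow_of_nonpos (by positivity) (by linarith) (by linarith)
  calc ENNReal.ofReal (2 ^ (-t) / (b + 1) * r ^ (a + c * -t + c / d * (b + 1)))
      = ENNReal.ofReal (2 ^ (-t) * r ^ (a + c * -t)) *
          ENNReal.ofReal ((r ^ (c / d)) ^ (b + 1) / (b + 1)) := by
        rw [← ENNReal.ofReal_mul (by positivity), ← rpow_mul hr0.le, rpow_add hr0]
        ring_nf
    _ = ∫⁻ s in Ioo 0 (r ^ (c / d)),
          ENNReal.ofReal (2 ^ (-t) * r ^ (a + c * -t)) * ENNReal.ofReal (s ^ b) := by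
        rw [lintegral_const_mul' _ _ ENNReal.ofReal_ne_top, lintegral_Ioo_rpow hb (by positivity)]
    _ ≤ ∫⁻ s in Ioo 0 (r ^ (c / d)), ENNReal.ofReal (r ^ a * s ^ b * (r ^ c + s ^ d) ^ (-t)) := by
        refine setLIntegral_mono' measurableSet_Ioo fun s hs => ?_
        rw [← ENNReal.ofReal_mul (by positivity)]
        exact ENNReal.ofReal_le_ofReal (bound s hs)
    _ ≤ ∫⁻ s in Ioo 0 1, ENNReal.ofReal (r ^ a * s ^ b * (r ^ c + s ^ d) ^ (-t)) :=
        lintegral_mono_set (Ioo_subset_Ioo_right (rpow_le_one hr0.le hr1.le (by positivity)))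

theorem lintegral_unitSquare_eq_top (hb : -1 < b) (hc : 0 < c) (hd : 0 < d) (ht : 0 ≤ t)
    (htab : (a + 1) / c + (b + 1) / d ≤ t) :
    ∫⁻ r in Ioo 0 1, ∫⁻ s in Ioo 0 1,
      ENNReal.ofReal (r ^ a * s ^ b * (r ^ c + s ^ d) ^ (-t)) = ⊤ := by
  have hb1 : 0 < b + 1 := by linarith
  set E := a + c * -t + c / d * (b + 1)
  have hE : E ≤ -1 := by
    have := mul_le_mul_of_nonneg_left htab hc.le
    rw [mul_add, mul_div_cancel₀ _ hc.ne', mul_div_assoc', ← div_mul_eq_mul_div] at this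
    linarith
  refine eq_top_iff.2 ?_
  calc ⊤ = ENNReal.ofReal (2 ^ (-t) / (b + 1)) * ∫⁻ r in Ioo 0 1, ENNReal.ofReal (r ^ E) := by
        rw [not_lt_top_iff.1 (mt lintegral_Ioo_rpow_lt_top_iff.1 hE.not_gt),
          ENNReal.mul_top (by positivity)]
    _ = ∫⁻ r in Ioo 0 1, ENNReal.ofReal (2 ^ (-t) / (b + 1) * r ^ E) := by
        rw [← lintegral_const_mul' _ _ ENNReal.ofReal_ne_top]
        refine setLIntegral_congr_fun measurableSet_Ioo fun r hr => ?_
        rw [ENNReal.ofReal_mul (by positivity)]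
    _ ≤ _ := setLIntegral_mono' measurableSet_Ioo fun r hr =>
        ofReal_mul_rpow_le_lintegral_Ioo hb hc hd ht hr

theorem lintegral_unitSquare_lt_top_iff (ha : -1 < a) (hb : -1 < b) (hc : 0 < c) (hd : 0 < d)
    (ht : 0 ≤ t) :
    ∫⁻ r in Ioo 0 1, ∫⁻ s in Ioo 0 1,
        ENNReal.ofReal (r ^ a * s ^ b * (r ^ c + s ^ d) ^ (-t)) < ⊤ ↔
      t < (a + 1) / c + (b + 1) / d :=
  ⟨fun h => lt_of_not_ge fun h' => h.ne (lintegral_unitSquare_eq_top hb hc hd ht h'),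
    lintegral_unitSquare_lt_top ha hb hc hd ht⟩

end UnitSquare

theorem integrableOn_unitPolydisc_iff {α p q t : ℝ} (hα : 0 < α) (hp : -1 < p) (hq : -1 < q)
    (ht : 0 ≤ t) :
    IntegrableOn
        (fun x : ℂ × ℂ => ‖x.1‖ ^ (2 * p) * ‖x.2‖ ^ (2 * q) * (‖x.1‖ ^ (2 * α) + ‖x.2‖ ^ 2) ^ (-t))
        {x : ℂ × ℂ | ‖x.1‖ < 1 ∧ ‖x.2‖ < 1} ↔
      t < (p + 1) / α + (q + 1) := by
  have integrand_eq : ∀ r ∈ Ioo (0 : ℝ) 1, ∀ s ∈ Ioo (0 : ℝ) 1,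
      ENNReal.ofReal (r * s) * ‖r ^ (2 * p) * s ^ (2 * q) * (r ^ (2 * α) + s ^ 2) ^ (-t)‖ₑ =
        ENNReal.ofReal
          (r ^ (2 * p + 1) * s ^ (2 * q + 1) * (r ^ (2 * α) + s ^ (2 : ℝ)) ^ (-t)) := by
    rintro r ⟨hr, -⟩ s ⟨hs, -⟩
    rw [Real.enorm_of_nonneg (by positivity), ← ENNReal.ofReal_mul (by positivity),
      rpow_add_one hr.ne', rpow_add_one hs.ne', rpow_two]
    ring_nf
  rw [integrableOn_unitPolydisc_comp_norm_iff
      (g := fun r s => r ^ (2 * p) * s ^ (2 * q) * (r ^ (2 * α) + s ^ 2) ^ (-t)) (by fun_prop),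
    setLIntegral_congr_fun measurableSet_Ioo fun r hr =>
      setLIntegral_congr_fun measurableSet_Ioo fun s hs => integrand_eq r hr s hs,
    lintegral_unitSquare_lt_top_iff (by linarith) (by linarith) (by positivity) two_pos ht,
    show (2 * p + 1 + 1) / (2 * α) + (2 * q + 1 + 1) / 2 = (p + 1) / α + (q + 1) by
    field_simp; ring]

/-- With `α = 1 − 2√6/5`, the function `(x,y) ↦ |x|^{2p}|y|^{2q}(|x|^{2α}+|y|²)^{-t}`
is integrable on the open unit polydisc iff `t < (p+1)/α + (q+1)`; in particular the singularity
exponent of `log(|x|^{2α}+|y|²)` is `1 + 1/α`. -/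
theorem stmt_15 :
    (∀ p q : ℕ, ∀ t : ℝ, 0 < t →
      (IntegrableOn
          (fun x : ℂ × ℂ =>
            ‖x.1‖ ^ (2 * (p : ℝ)) * ‖x.2‖ ^ (2 * (q : ℝ)) *
              (‖x.1‖ ^ (2 * (1 - 2 * Real.sqrt 6 / 5)) + ‖x.2‖ ^ 2) ^ (-t))
          {x : ℂ × ℂ | ‖x.1‖ < 1 ∧ ‖x.2‖ < 1} volume
        ↔ t < ((p : ℝ) + 1) / (1 - 2 * Real.sqrt 6 / 5) + ((q : ℝ) + 1))) ∧
    sSup {t : ℝ | 0 < t ∧ IntegrableOn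
        (fun x : ℂ × ℂ =>
          (‖x.1‖ ^ (2 * (1 - 2 * Real.sqrt 6 / 5)) + ‖x.2‖ ^ 2) ^ (-t))
        {x : ℂ × ℂ | ‖x.1‖ < 1 ∧ ‖x.2‖ < 1} volume}
      = 1 + 1 / (1 - 2 * Real.sqrt 6 / 5) := by
  set α := 1 - 2 * √6 / 5 with hα_def
  have hα : 0 < α := by
    rw [hα_def]
    have : √6 < 5 / 2 := (sqrt_lt' (by norm_num)).2 (by norm_num)
    linarith
  refine ⟨fun p q t ht => integrableOn_unitPolydisc_iff hα
    (neg_one_lt_zero.trans_le p.cast_nonneg) (neg_one_lt_zero.trans_le q.cast_nonneg) ht.le, ?_⟩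
  have hset : {t : ℝ | 0 < t ∧ IntegrableOn
      (fun x : ℂ × ℂ => (‖x.1‖ ^ (2 * α) + ‖x.2‖ ^ 2) ^ (-t))
      {x : ℂ × ℂ | ‖x.1‖ < 1 ∧ ‖x.2‖ < 1} volume} = Ioo 0 (1 + 1 / α) := by
    ext t
    refine and_congr_right fun ht => ?_
    simpa [add_comm] using integrableOn_unitPolydisc_iff hα (p := 0) (q := 0) neg_one_lt_zero
      neg_one_lt_zero ht.le
  rw [hset, csSup_Ioo (by positivity)]
end
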